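/- arXiv:1104.2981 — 12 statements merged into one kernel-verified Lean document; each statement's English description precedes it below -/
import Mathlib

section
/- Cartan's lemma: Let V be a bounded connected open subset of a finite-dimensional complex vector space E containing 0, and let Φ : V → V be a holomorphic map with Φ(0) = 0 and D_0Φ = id. Then Φ is the identity map on V. -/
/-!
Write the Taylor series of `Φ` at `0` as `z + P_m(z) + O(z^(m+1))`, where `P_m` is the first
nonlinear homogeneous term. Composing series, the `n`-th iterate is `z + n P_m(z) + O(z^(m+1))`.
All iterates map `V` into the bounded set `V`, so Cauchy's estimates on a fixed small ball bound
`n P_m` uniformly in `n`, forcing `P_m = 0`. Hence `Φ = id` near `0`, and on all of the connected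
set `V` by the identity theorem.
-/

open Set Metric Filter Topology

theorem Composition.exists_two_le_blocksFun {n : ℕ} {c : Composition n} (hc : c ≠ ones n) :
    ∃ i, 2 ≤ c.blocksFun i := by
  obtain ⟨k, hk, hk1⟩ := ne_ones_iff.1 hc
  rw [← ofFn_blocksFun, List.mem_ofFn] at hk
  obtain ⟨i, rfl⟩ := hk
  exact ⟨i, hk1⟩

section NontriviallyNormedField

variable {𝕜 : Type*} [NontriviallyNormedField 𝕜] {E F G : Type*}
  [NormedAddCommGroup E] [NormedSpace 𝕜 E] [NormedAddCommGroup F] [NormedSpace 𝕜 F]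
  [NormedAddCommGroup G] [NormedSpace 𝕜 G]

namespace FormalMultilinearSeries

theorem compAlongComposition_apply_diag_eq_zero (q : FormalMultilinearSeries 𝕜 F G)
    (p : FormalMultilinearSeries 𝕜 E F) {n : ℕ} (c : Composition n) (i : Fin c.length) {v : E}
    (h : p (c.blocksFun i) (fun _ => v) = 0) :
    q.compAlongComposition p c (fun _ => v) = 0 := by
  rw [compAlongComposition_apply]
  exact ContinuousMultilinearMap.map_coord_zero _ i h

theorem compAlongComposition_ones_apply_diag (q : FormalMultilinearSeries 𝕜 E F)
    (p : FormalMultilinearSeries 𝕜 E E) (n : ℕ) {v : E} (hv : p 1 (fun _ => v) = v) :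
    q.compAlongComposition p (Composition.ones n) (fun _ => v) = q n (fun _ => v) := by
  rw [compAlongComposition_apply]
  exact q.congr (Composition.ones_length n) fun _ _ _ => by rw [applyComposition_ones]; exact hv

theorem compAlongComposition_single_apply_diag (q : FormalMultilinearSeries 𝕜 F F)
    (p : FormalMultilinearSeries 𝕜 E F) {n : ℕ} (hn : 0 < n) (v : E)
    (hq : ∀ w, q 1 (fun _ => w) = w) :
    q.compAlongComposition p (Composition.single n hn) (fun _ => v) = p n (fun _ => v) := by
  rw [compAlongComposition_apply, applyComposition_single]
  exact hq _

theorem comp_apply_diag (q : FormalMultilinearSeries 𝕜 F G) (p : FormalMultilinearSeries 𝕜 E F)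
    (n : ℕ) (v : E) :
    (q.comp p) n (fun _ => v) = ∑ c : Composition n, q.compAlongComposition p c (fun _ => v) := by
  simp [FormalMultilinearSeries.comp]

/-- Only the diagonal values `p j (v, …, v)` are constrained: the coefficients of a power series
need not be symmetric, and only their diagonals are determined by the function. -/
def DiagIsIdBelow (p : FormalMultilinearSeries 𝕜 E E) (m : ℕ) : Prop :=
  (∀ v, p 1 (fun _ => v) = v) ∧ ∀ j, 2 ≤ j → j < m → ∀ v, p j (fun _ => v) = 0

namespace DiagIsIdBelow

variable {p q : FormalMultilinearSeries 𝕜 E E} {m : ℕ}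

theorem comp (hq : q.DiagIsIdBelow m) (hp : p.DiagIsIdBelow m) : (q.comp p).DiagIsIdBelow m := by
  refine ⟨fun v => by rw [comp_coeff_one, hp.1, hq.1], fun j hj hjm v => ?_⟩
  rw [comp_apply_diag]
  refine Finset.sum_eq_zero fun c _ => ?_
  by_cases hc : c = Composition.ones j
  · rw [hc, compAlongComposition_ones_apply_diag q p j (hp.1 v)]
    exact hq.2 j hj hjm v
  · obtain ⟨i, hi⟩ := Composition.exists_two_le_blocksFun hc
    exact compAlongComposition_apply_diag_eq_zero q p c i
      (hp.2 _ hi ((c.blocksFun_le i).trans_lt hjm) v)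

theorem comp_apply_diag_eq_add (hm : 2 ≤ m) (hq : q.DiagIsIdBelow m) (hp : p.DiagIsIdBelow m)
    (v : E) : (q.comp p) m (fun _ => v) = q m (fun _ => v) + p m (fun _ => v) := by
  have hm0 : 0 < m := by omega
  have hne : Composition.ones m ≠ Composition.single m hm0 := by
    rw [ne_eq, Composition.eq_single_iff_length, Composition.ones_length]
    omega
  rw [comp_apply_diag, ← compAlongComposition_ones_apply_diag q p m (hp.1 v),
    ← compAlongComposition_single_apply_diag q p hm0 v hq.1,
    ← Finset.sum_pair (f := fun c => q.compAlongComposition p c (fun _ => v)) hne]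
  refine (Finset.sum_subset (Finset.subset_univ _) fun c _ hc => ?_).symm
  simp only [Finset.mem_insert, Finset.mem_singleton, not_or] at hc
  obtain ⟨i, hi⟩ := Composition.exists_two_le_blocksFun hc.1
  exact compAlongComposition_apply_diag_eq_zero q p c i
    (hp.2 _ hi ((Composition.ne_single_iff hm0).1 hc.2 i) v)

end DiagIsIdBelow

theorem diagIsIdBelow_id (x : E) (m : ℕ) :
    ((ContinuousLinearMap.id 𝕜 E).fpowerSeries x).DiagIsIdBelow m := by
  refine ⟨fun v => by simp, fun j hj _ v => ?_⟩
  obtain ⟨k, rfl⟩ := Nat.exists_eq_add_of_le' hj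
  simp

end FormalMultilinearSeries

theorem AnalyticOnNhd.iterate {f : E → E} {s : Set E} (hf : AnalyticOnNhd 𝕜 f s)
    (hs : MapsTo f s s) (n : ℕ) : AnalyticOnNhd 𝕜 f^[n] s := by
  induction n with
  | zero => exact analyticOnNhd_id
  | succ n ih => exact Function.iterate_succ' f n ▸ hf.comp ih (hs.iterate n)

theorem HasFPowerSeriesAt.exists_iterate_apply_diag_eq_nsmul {f : E → E}
    {p : FormalMultilinearSeries 𝕜 E E} {m : ℕ} (hf : HasFPowerSeriesAt f p 0) (hf0 : f 0 = 0)
    (hm : 2 ≤ m) (hp : p.DiagIsIdBelow m) (n : ℕ) :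
    ∃ Q : FormalMultilinearSeries 𝕜 E E, HasFPowerSeriesAt f^[n] Q 0 ∧ Q.DiagIsIdBelow m ∧
      ∀ v, Q m (fun _ => v) = n • p m (fun _ => v) := by
  induction n with
  | zero =>
    refine ⟨_, (ContinuousLinearMap.id 𝕜 E).hasFPowerSeriesAt 0,
      FormalMultilinearSeries.diagIsIdBelow_id 0 m, fun v => ?_⟩
    obtain ⟨k, rfl⟩ := Nat.exists_eq_add_of_le' hm
    simp
  | succ n ih =>
    obtain ⟨Q, hQ, hQm, hQv⟩ := ih
    have hfn : HasFPowerSeriesAt f p (f^[n] 0) := by rwa [Function.iterate_fixed hf0]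
    refine ⟨p.comp Q, Function.iterate_succ' f n ▸ hfn.comp hQ, hp.comp hQm, fun v => ?_⟩
    rw [hp.comp_apply_diag_eq_add hm hQm, hQv, succ_nsmul']

theorem HasFPowerSeriesAt.eventuallyEq_of_apply_diag_eq {f g : E → F}
    {p q : FormalMultilinearSeries 𝕜 E F} {x : E}
    (hf : HasFPowerSeriesAt f p x) (hg : HasFPowerSeriesAt g q x)
    (h : ∀ n v, p n (fun _ => v) = q n (fun _ => v)) : f =ᶠ[𝓝 x] g := by
  filter_upwards [hf.eventually_hasSum_sub, hg.eventually_hasSum_sub] with y hfy hgy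
  simp only [h] at hfy
  exact hfy.unique hgy

theorem ContinuousMultilinearMap.apply_diag_eq_zero_of_eventually {n : ℕ}
    (A : ContinuousMultilinearMap 𝕜 (fun _ : Fin n => E) F)
    (h : ∀ᶠ v in 𝓝 0, A (fun _ => v) = 0) (v : E) : A (fun _ => v) = 0 := by
  have hsmul : Tendsto (fun t : 𝕜 => t • v) (𝓝[≠] 0) (𝓝 0) :=
    ((continuous_id.smul continuous_const).tendsto' 0 0 (zero_smul 𝕜 v)).mono_left
      nhdsWithin_le_nhds
  obtain ⟨t, ht, ht0⟩ := ((hsmul.eventually h).and self_mem_nhdsWithin).exists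
  rw [A.map_smul_univ (fun _ => t) (fun _ => v), Finset.prod_const, Finset.card_fin] at ht
  exact (smul_eq_zero.1 ht).resolve_left (pow_ne_zero _ ht0)

end NontriviallyNormedField

theorem eq_zero_of_forall_norm_nsmul_le {E : Type*} [NormedAddCommGroup E] [NormedSpace ℝ E]
    {a : E} {C : ℝ} (h : ∀ n : ℕ, ‖n • a‖ ≤ C) : a = 0 := by
  by_contra ha
  obtain ⟨n, hn⟩ := exists_nat_gt (C / ‖a‖)
  have := h n
  rw [RCLike.norm_nsmul ℝ, nsmul_eq_mul, ← le_div_iff₀ (norm_pos_iff.2 ha)] at this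
  linarith

section Complex

variable {E F : Type*} [NormedAddCommGroup E] [NormedSpace ℂ E] [NormedAddCommGroup F]
  [NormedSpace ℂ F]

theorem HasFPowerSeriesAt.norm_apply_diag_le [CompleteSpace F] {f : E → F}
    {p : FormalMultilinearSeries ℂ E F} {r C : ℝ} (hf : HasFPowerSeriesAt f p 0)
    (hd : DifferentiableOn ℂ f (closedBall 0 r)) (hC : ∀ x ∈ closedBall 0 r, ‖f x‖ ≤ C)
    (n : ℕ) {v : E} (hv : ‖v‖ ≤ r) : ‖p n (fun _ => v)‖ ≤ C := by
  set L := ContinuousLinearMap.toSpanSingleton ℂ v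
  have hL : MapsTo L (closedBall 0 1) (closedBall 0 r) := fun z hz => by
    rw [mem_closedBall_zero_iff] at hz ⊢
    simpa [L, norm_smul] using mul_le_mul hz hv (norm_nonneg v) zero_le_one
  obtain ⟨ρ, hρ⟩ : HasFPowerSeriesAt (f ∘ L) (p.compContinuousLinearMap L) 0 :=
    (map_zero L).symm ▸ hf |>.compContinuousLinearMap
  have hderiv : n.factorial • p n (fun _ => v) = iteratedDeriv n (f ∘ L) 0 := by
    rw [iteratedDeriv_eq_iteratedFDeriv, ← hρ.factorial_smul 1 n,
      FormalMultilinearSeries.compContinuousLinearMap_apply]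
    simp only [Function.comp_def, L, ContinuousLinearMap.toSpanSingleton_apply, one_smul]
  have hcauchy := Complex.norm_iteratedDeriv_le_of_forall_mem_sphere_norm_le n one_pos
    ((hd.comp L.differentiableOn hL).diffContOnCl_ball subset_rfl)
    fun z hz => hC _ (hL (sphere_subset_closedBall hz))
  rw [← hderiv, RCLike.norm_nsmul ℂ, nsmul_eq_mul, one_pow, div_one] at hcauchy
  exact le_of_mul_le_mul_left hcauchy (mod_cast n.factorial_pos)

theorem FormalMultilinearSeries.DiagIsIdBelow.apply_diag_eq_zero_of_mapsTo [CompleteSpace E]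
    {V : Set E} {Φ : E → E} {p : FormalMultilinearSeries ℂ E E} {m : ℕ}
    (hp : p.DiagIsIdBelow m) (hm : 2 ≤ m)
    (hV : V ∈ 𝓝 0) (hVb : Bornology.IsBounded V) (hΦa : AnalyticOnNhd ℂ Φ V)
    (hΦV : MapsTo Φ V V) (hΦ0 : Φ 0 = 0) (hΦp : HasFPowerSeriesAt Φ p 0) (v : E) :
    p m (fun _ => v) = 0 := by
  obtain ⟨C, hC⟩ := hVb.exists_norm_le
  obtain ⟨r, hr0, hrV⟩ := nhds_basis_closedBall.mem_iff.1 hV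
  refine (p m).apply_diag_eq_zero_of_eventually ?_ v
  filter_upwards [closedBall_mem_nhds (0 : E) hr0] with w hw
  refine eq_zero_of_forall_norm_nsmul_le (C := C) fun n => ?_
  obtain ⟨Q, hQ, -, hQm⟩ := hΦp.exists_iterate_apply_diag_eq_nsmul hΦ0 hm hp n
  rw [← hQm]
  exact hQ.norm_apply_diag_le ((hΦa.iterate hΦV n).differentiableOn.mono hrV)
    (fun x hx => hC _ (hΦV.iterate n (hrV hx))) m (mem_closedBall_zero_iff.1 hw)

end Complex

/-- **Cartan's lemma.** Let `V` be a bounded connected open subset of a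
finite-dimensional complex vector space `E` containing `0`, and let
`Φ : V → V` be holomorphic with `Φ 0 = 0` and `D₀Φ = id`. Then `Φ = id` on `V`. -/
theorem cartan_lemma {E : Type*} [NormedAddCommGroup E] [NormedSpace ℂ E]
    [FiniteDimensional ℂ E] (V : Set E) (hVo : IsOpen V) (hVb : Bornology.IsBounded V)
    (hVc : IsConnected V) (h0V : (0 : E) ∈ V) (Φ : E → E)
    (hΦa : AnalyticOnNhd ℂ Φ V) (hΦV : Set.MapsTo Φ V V)
    (hΦ0 : Φ 0 = 0) (hDΦ : fderiv ℂ Φ 0 = ContinuousLinearMap.id ℂ E) :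
    ∀ v ∈ V, Φ v = v := by
  obtain ⟨p, hp⟩ := hΦa 0 h0V
  have hp1 : ∀ v, p 1 (fun _ => v) = v := fun v => by
    simpa [hDΦ, Matrix.vec_single_eq_const] using (DFunLike.congr_fun hp.fderiv_eq v).symm
  have hdiag : ∀ m, 2 ≤ m → ∀ v, p m (fun _ => v) = 0 := by
    intro m
    induction m using Nat.strong_induction_on with
    | _ m ih =>
      intro hm
      exact FormalMultilinearSeries.DiagIsIdBelow.apply_diag_eq_zero_of_mapsTo
        ⟨hp1, fun j hj hjm => ih j hjm hj⟩ hm (hVo.mem_nhds h0V) hVb hΦa hΦV hΦ0 hp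
  have hid : Φ =ᶠ[𝓝 0] id :=
    hp.eventuallyEq_of_apply_diag_eq ((ContinuousLinearMap.id ℂ E).hasFPowerSeriesAt 0)
      fun n v => match n with
        | 0 => by simpa [hΦ0] using hp.coeff_zero (fun _ => v)
        | 1 => by simp [hp1]
        | k + 2 => by simp [hdiag]
  exact fun v hv =>
    hΦa.eqOn_of_preconnected_of_eventuallyEq analyticOnNhd_id hVc.isPreconnected h0V hid hv
end

section
/- Böttcher's theorem: If f : (ℂ,0) → (ℂ,0) is a holomorphic germ of the form f(z) = a z^k + O(z^{k+1}) with a ≠ 0 and k ≥ 2, then there exists a holomorphic germ φ : (ℂ,0) → (ℂ,0) with φ(0) = 0 and φ'(0) = 1 such that φ(f(z)) = a·(φ(z))^k for all z in some neighborhood of 0. -/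
/-!
Write `f z = a z^k (1 + u z)` with `u` holomorphic and `u 0 = 0`, and `L = log (1 + u)`.
Looking for `φ z = z · exp (H z)`, the conjugacy `φ ∘ f = a φ^k` becomes the cohomological
equation `H ∘ f = k H - L`, solved by `H = ∑ₙ k^{-(n+1)} L ∘ fⁿ`. On a small disc `f` is a
self-map (`f = o(z)` as `k ≥ 2`) and `L` is bounded, so the series converges uniformly there
and `H` is holomorphic; `f 0 = 0` and `L 0 = 0` give `H 0 = 0`, hence `φ' 0 = 1`.
-/

open Filter Asymptotics Metric Set Topology

section Order

variable {𝕜 E : Type*} [NontriviallyNormedField 𝕜] [NormedAddCommGroup E] [NormedSpace 𝕜 E]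
  {F : 𝕜 → E} {m : ℕ}

theorem AnalyticAt.natCast_le_analyticOrderAt_of_isBigO (hF : AnalyticAt 𝕜 F 0)
    (h : F =O[𝓝 0] fun z => z ^ m) : (m : ℕ∞) ≤ analyticOrderAt F 0 := by
  by_contra! hlt
  obtain ⟨n, hn⟩ := ENat.ne_top_iff_exists.mp hlt.ne_top
  obtain ⟨g, hg, hg0, hFg⟩ := hF.analyticOrderAt_eq_natCast.mp hn.symm
  have hnm : n < m := by exact_mod_cast hn ▸ hlt
  have hg_large : ∀ᶠ z in 𝓝 0, ‖g 0‖ / 2 < ‖g z‖ :=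
    hg.continuousAt.norm.eventually (lt_mem_nhds (half_lt_self (norm_pos_iff.mpr hg0)))
  have hpow : (fun z : 𝕜 => z ^ n) =O[𝓝 0] F := by
    refine IsBigO.of_bound (2 / ‖g 0‖) ?_
    filter_upwards [hg_large, hFg] with z hz hFz
    rw [hFz, sub_zero, norm_smul]
    calc ‖z ^ n‖ = 2 / ‖g 0‖ * (‖z ^ n‖ * (‖g 0‖ / 2)) := by field_simp
      _ ≤ 2 / ‖g 0‖ * (‖z ^ n‖ * ‖g z‖) := by gcongr
  have hz_ne : ∀ᶠ z in 𝓝[≠] (0 : 𝕜), ‖z ^ n‖ ≠ 0 :=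
    eventually_nhdsWithin_of_forall fun z (hz : z ≠ 0) => by simp [hz]
  exact isLittleO_irrefl' (hz_ne.frequently.filter_mono nhdsWithin_le_nhds)
    ((hpow.trans h).trans_isLittleO (isLittleO_pow_pow hnm))

theorem AnalyticAt.exists_eventuallyEq_pow_smul_of_isBigO (hF : AnalyticAt 𝕜 F 0)
    (h : F =O[𝓝 0] fun z => z ^ m) :
    ∃ g : 𝕜 → E, AnalyticAt 𝕜 g 0 ∧ ∀ᶠ z in 𝓝 0, F z = z ^ m • g z := by
  simpa using (natCast_le_analyticOrderAt hF).mp (hF.natCast_le_analyticOrderAt_of_isBigO h)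

end Order

section OrbitSeries

variable {α 𝕜 E : Type*} [NormedField 𝕜] [NormedAddCommGroup E] [NormedSpace 𝕜 E]
  {T : α → α} {L : α → E} {c : 𝕜} {s : Set α} {C : ℝ} {x : α}

/-- Obtained by iterating `h = c⁻¹ • (h ∘ T + L)` along the orbit of `x`. -/
noncomputable def orbitSeries (T : α → α) (L : α → E) (c : 𝕜) (x : α) : E :=
  ∑' n : ℕ, (c ^ (n + 1))⁻¹ • L (T^[n] x)

theorem norm_inv_pow_smul_apply_iterate_le (hT : MapsTo T s s) (hL : ∀ y ∈ s, ‖L y‖ ≤ C)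
    (hx : x ∈ s) (m n : ℕ) : ‖(c ^ m)⁻¹ • L (T^[n] x)‖ ≤ C * ‖c‖⁻¹ ^ m := by
  rw [norm_smul, norm_inv, norm_pow, inv_pow, mul_comm]
  gcongr
  exact hL _ (hT.iterate n hx)

theorem summable_mul_inv_norm_pow (hc : 1 < ‖c‖) (C : ℝ) :
    Summable fun n : ℕ => C * ‖c‖⁻¹ ^ n :=
  (summable_geometric_of_lt_one (by positivity) (inv_lt_one_of_one_lt₀ hc)).mul_left C

theorem orbitSeries_map [CompleteSpace E] (hT : MapsTo T s s) (hL : ∀ y ∈ s, ‖L y‖ ≤ C)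
    (hc : 1 < ‖c‖) (hx : x ∈ s) : orbitSeries T L c (T x) = c • orbitSeries T L c x - L x := by
  have hc0 : c ≠ 0 := norm_pos_iff.mp (one_pos.trans hc)
  have hS : Summable fun n : ℕ => (c ^ n)⁻¹ • L (T^[n] x) :=
    (summable_mul_inv_norm_pow hc C).of_norm_bounded
      fun n => norm_inv_pow_smul_apply_iterate_le hT hL hx n n
  have hscale : c • orbitSeries T L c x = ∑' n : ℕ, (c ^ n)⁻¹ • L (T^[n] x) := by
    rw [orbitSeries, ← tsum_const_smul'']
    congr 1 with n
    rw [smul_smul, pow_succ', mul_inv, mul_inv_cancel_left₀ hc0]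
  rw [hscale, hS.tsum_eq_zero_add, orbitSeries]
  simp only [pow_zero, inv_one, one_smul, Function.iterate_zero_apply, Function.iterate_succ_apply]
  abel

theorem orbitSeries_eq_zero (hTx : T x = x) (hLx : L x = 0) : orbitSeries T L c x = 0 := by
  simp [orbitSeries, Function.iterate_fixed hTx, hLx]

end OrbitSeries

theorem DifferentiableOn.orbitSeries {E : Type*} [NormedAddCommGroup E] [NormedSpace ℂ E]
    [CompleteSpace E] {T : ℂ → ℂ} {L : ℂ → E} {s : Set ℂ} {c : ℂ} {C : ℝ} (hs : IsOpen s)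
    (hT : MapsTo T s s) (hTd : DifferentiableOn ℂ T s) (hLd : DifferentiableOn ℂ L s)
    (hL : ∀ y ∈ s, ‖L y‖ ≤ C) (hc : 1 < ‖c‖) :
    DifferentiableOn ℂ (orbitSeries T L c) s :=
  Complex.differentiableOn_tsum_of_summable_norm
    ((summable_nat_add_iff 1).mpr (summable_mul_inv_norm_pow hc C))
    (fun n => (hLd.comp (hTd.iterate hT n) (hT.iterate n)).const_smul _) hs
    fun n _ hx => norm_inv_pow_smul_apply_iterate_le hT hL hx (n + 1) n

theorem AnalyticAt.exists_eventuallyEq_mul_pow_mul_one_add {𝕜 : Type*}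
    [NontriviallyNormedField 𝕜] {f : 𝕜 → 𝕜} {a : 𝕜} {k : ℕ} (ha : a ≠ 0) (hf : AnalyticAt 𝕜 f 0)
    (hexp : (fun z => f z - a * z ^ k) =O[𝓝 0] fun z => z ^ (k + 1)) :
    ∃ u : 𝕜 → 𝕜, AnalyticAt 𝕜 u 0 ∧ u 0 = 0 ∧ ∀ᶠ z in 𝓝 0, f z = a * z ^ k * (1 + u z) := by
  obtain ⟨g, hg, hfg⟩ :=
    (hf.sub (analyticAt_const.mul (analyticAt_id.pow k))).exists_eventuallyEq_pow_smul_of_isBigO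
      hexp
  refine ⟨fun z => z * g z / a, (analyticAt_id.mul hg).div analyticAt_const ha, by simp, ?_⟩
  filter_upwards [hfg] with z (hz : f z - a * z ^ k = z ^ (k + 1) * g z)
  field_simp
  linear_combination hz

theorem isLittleO_id_of_isBigO_sub_mul_pow {𝕜 : Type*} [NontriviallyNormedField 𝕜]
    {f : 𝕜 → 𝕜} {a : 𝕜} {k : ℕ} (hk : 2 ≤ k)
    (hexp : (fun z => f z - a * z ^ k) =O[𝓝 0] fun z => z ^ (k + 1)) :
    f =o[𝓝 0] fun z => z := by
  have hrem := hexp.trans_isLittleO (isLittleO_pow_pow (by omega : 1 < k + 1))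
  have hlead :=
    (isBigO_const_mul_self a _ _).trans_isLittleO (isLittleO_pow_pow (by omega : 1 < k))
  simpa using hrem.add hlead

open Complex in
theorem exists_conj_mul_pow_of_mapsTo_ball {f u : ℂ → ℂ} {a : ℂ} {k : ℕ} {r : ℝ} (hk : 2 ≤ k)
    (hr : 0 < r) (hmaps : MapsTo f (ball 0 r) (ball 0 r))
    (hud : DifferentiableOn ℂ u (ball 0 r)) (hu0 : u 0 = 0)
    (hu : ∀ z ∈ ball (0 : ℂ) r, ‖u z‖ ≤ 1 / 2)
    (hfu : ∀ z ∈ ball (0 : ℂ) r, f z = a * z ^ k * (1 + u z)) :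
    ∃ φ : ℂ → ℂ, AnalyticAt ℂ φ 0 ∧ φ 0 = 0 ∧ deriv φ 0 = 1 ∧
      ∀ z ∈ ball (0 : ℂ) r, φ (f z) = a * φ z ^ k := by
  set L := fun z => log (1 + u z)
  have hslit : ∀ z ∈ ball (0 : ℂ) r, 1 + u z ∈ slitPlane := fun z hz =>
    mem_slitPlane_of_norm_lt_one ((hu z hz).trans_lt (by norm_num))
  have hL : ∀ z ∈ ball (0 : ℂ) r, ‖L z‖ ≤ 3 / 4 := fun z hz =>
    (norm_log_one_add_half_le_self (hu z hz)).trans (by linarith [hu z hz])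
  have hfd : DifferentiableOn ℂ f (ball 0 r) :=
    (((differentiableOn_const a).mul (differentiableOn_pow k)).mul (hud.const_add 1)).congr hfu
  have hk' : 1 < ‖(k : ℂ)‖ := by
    rw [norm_natCast]
    exact_mod_cast hk
  set H := orbitSeries f L (k : ℂ)
  have hHd : DifferentiableOn ℂ H (ball 0 r) :=
    .orbitSeries isOpen_ball hmaps hfd ((hud.const_add 1).clog hslit) hL hk'
  have hHa : AnalyticAt ℂ H 0 := hHd.analyticAt (ball_mem_nhds 0 hr)
  have hH0 : H 0 = 0 :=
    orbitSeries_eq_zero (by simpa [zero_pow (by omega : k ≠ 0)] using hfu 0 (mem_ball_self hr))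
      (by simp [L, hu0])
  refine ⟨fun z => z * exp (H z), analyticAt_id.mul hHa.cexp, by simp, ?_, fun z hz => ?_⟩
  · rw [((hasDerivAt_id' 0).fun_mul hHa.differentiableAt.hasDerivAt.cexp).deriv, hH0]
    simp
  · show f z * exp (H (f z)) = a * (z * exp (H z)) ^ k
    have hexpL : exp (L z) = 1 + u z := exp_log (slitPlane_ne_zero (hslit z hz))
    have hHf : H (f z) = k * H z - L z := orbitSeries_map hmaps hL hk' hz
    rw [hHf, hfu z hz, exp_sub, exp_nat_mul, hexpL, mul_pow]
    field_simp [slitPlane_ne_zero (hslit z hz)]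

theorem boettcher_general (f : ℂ → ℂ) (a : ℂ) (ha : a ≠ 0) (k : ℕ) (hk : 2 ≤ k)
    (hf : AnalyticAt ℂ f 0)
    (hexp : (fun z => f z - a * z ^ k) =O[nhds (0 : ℂ)] fun z => z ^ (k + 1)) :
    ∃ φ : ℂ → ℂ, AnalyticAt ℂ φ 0 ∧ φ 0 = 0 ∧ deriv φ 0 = 1 ∧
      ∀ᶠ z in nhds (0 : ℂ), φ (f z) = a * (φ z) ^ k := by
  obtain ⟨u, hu, hu0, hfu⟩ := hf.exists_eventuallyEq_mul_pow_mul_one_add ha hexp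
  have hu_small : ∀ᶠ z in 𝓝 0, ‖u z‖ ≤ 1 / 2 :=
    hu.continuousAt.norm.eventually (Iic_mem_nhds (by simp [hu0]))
  have hcontract := (isLittleO_id_of_isBigO_sub_mul_pow hk hexp).def one_pos
  obtain ⟨r, hr, hball⟩ := eventually_nhds_iff_ball.mp
    (hfu.and (hcontract.and (hu.eventually_analyticAt.and hu_small)))
  have hmaps : MapsTo f (ball 0 r) (ball 0 r) := fun z hz => mem_ball_zero_iff.mpr
    (((hball z hz).2.1.trans_eq (one_mul _)).trans_lt (mem_ball_zero_iff.mp hz))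
  obtain ⟨φ, hφ, hφ0, hφ', hconj⟩ := exists_conj_mul_pow_of_mapsTo_ball hk hr hmaps
    (fun z hz => (hball z hz).2.2.1.differentiableAt.differentiableWithinAt) hu0
    (fun z hz => (hball z hz).2.2.2) (fun z hz => (hball z hz).1)
  exact ⟨φ, hφ, hφ0, hφ', eventually_of_mem (ball_mem_nhds 0 hr) hconj⟩

/-- **Böttcher's theorem.** If `f : (ℂ,0) → (ℂ,0)` is a holomorphic germ with
`f z = a z^k + O(z^(k+1))`, `a ≠ 0`, `k ≥ 2`, then there is a holomorphic germ
`φ` with `φ 0 = 0`, `φ' 0 = 1`, conjugating `f` to `w ↦ a w^k` near `0`. -/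
theorem boettcher (f : ℂ → ℂ) (a : ℂ) (ha : a ≠ 0) (k : ℕ) (hk : 2 ≤ k)
    (hf : AnalyticAt ℂ f 0) (hf0 : f 0 = 0)
    (hexp : (fun z => f z - a * z ^ k) =O[nhds (0 : ℂ)] fun z => z ^ (k + 1)) :
    ∃ φ : ℂ → ℂ, AnalyticAt ℂ φ 0 ∧ φ 0 = 0 ∧ deriv φ 0 = 1 ∧
      ∀ᶠ z in nhds (0 : ℂ), φ (f z) = a * (φ z) ^ k :=
  boettcher_general f a ha k hk hf hexp
end

section
/- Let H : L → L be a nondegenerate homogeneous map of degree k ≥ 2 on a finite-dimensional complex normed space L. Then the sequence of functions G^n(v) = (1/k^n)·log‖H^{∘n}(v)‖ converges uniformly on L ∖ {0} to a function G satisfying G(v) = log‖v‖ + O(1) and G(H(v)) = k·G(v). -/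
/-!
Tate's telescoping argument. The defect `log ‖H v‖ - k log ‖v‖` is invariant under positive
rescaling of `v`, so it is bounded on `L \ {0}`, say by `M`, through its values on the compact
unit sphere. Along an orbit, consecutive terms of `k⁻ⁿ log ‖H^[n] v‖` therefore differ by at most
`M / k^(n+1)`, so the sequence converges uniformly, stays within `M / (k - 1)` of `log ‖v‖`, and
its limit `G` satisfies `G ∘ H = k G` because shifting the orbit by one step multiplies the
sequence by `k`.
-/

open Filter Set Function

section Telescoping

variable {α : Type*} {s : Set α} {T : α → α} {φ : α → ℝ} {k M : ℝ}

theorem hasSum_div_pow_succ (hk : 1 < k) : HasSum (fun n : ℕ => M / k ^ (n + 1)) (M / (k - 1)) := by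
  have hk0 : k ≠ 0 := by positivity
  have hk1 : k - 1 ≠ 0 := by linarith
  have hterm : (fun n : ℕ => M / k ^ (n + 1)) = fun n => M / k * k⁻¹ ^ n := by
    ext n
    rw [inv_pow, pow_succ]
    field_simp
  have hval : M / (k - 1) = M / k * (1 - k⁻¹)⁻¹ := by
    field_simp
  rw [hterm, hval]
  exact (hasSum_geometric_of_lt_one (inv_nonneg.mpr (zero_le_one.trans hk.le))
    (inv_lt_one_of_one_lt₀ hk)).mul_left (M / k)

theorem abs_div_pow_succ_iterate_sub_le (hT : MapsTo T s s) (hk : 0 < k)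
    (hφ : ∀ x ∈ s, |φ (T x) - k * φ x| ≤ M) {x : α} (hx : x ∈ s) (n : ℕ) :
    |φ (T^[n + 1] x) / k ^ (n + 1) - φ (T^[n] x) / k ^ n| ≤ M / k ^ (n + 1) := by
  have hkn : 0 < k ^ (n + 1) := pow_pos hk _
  have hdiff : φ (T^[n + 1] x) / k ^ (n + 1) - φ (T^[n] x) / k ^ n
      = (φ (T (T^[n] x)) - k * φ (T^[n] x)) / k ^ (n + 1) := by
    rw [iterate_succ_apply']
    field_simp
    ring
  rw [hdiff, abs_div, abs_of_pos hkn]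
  exact div_le_div_of_nonneg_right (hφ _ (hT.iterate n hx)) hkn.le

theorem exists_tendstoUniformlyOn_div_pow_iterate (hT : MapsTo T s s) (hk : 1 < k)
    (hφ : ∀ x ∈ s, |φ (T x) - k * φ x| ≤ M) :
    ∃ G : α → ℝ, TendstoUniformlyOn (fun n x => φ (T^[n] x) / k ^ n) G atTop s ∧
      (∀ x ∈ s, |G x - φ x| ≤ M / (k - 1)) ∧ ∀ x ∈ s, G (T x) = k * G x := by
  set a : ℕ → α → ℝ := fun n x => φ (T^[n] x) / k ^ n with ha
  have hbound : ∀ n, ∀ x ∈ s, ‖a (n + 1) x - a n x‖ ≤ M / k ^ (n + 1) := fun n x hx =>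
    abs_div_pow_succ_iterate_sub_le hT (by linarith) hφ hx n
  have hpartial : ∀ n x, ∑ j ∈ Finset.range n, (a (j + 1) x - a j x) + φ x = a n x := by
    intro n x
    rw [Finset.sum_range_sub (a · x)]
    simp [ha]
  set G : α → ℝ := fun x => ∑' j, (a (j + 1) x - a j x) + φ x
  have hG : TendstoUniformlyOn a G atTop s := by
    have hsum := tendstoUniformlyOn_tsum_nat (hasSum_div_pow_succ hk).summable hbound
    rw [Metric.tendstoUniformlyOn_iff] at hsum ⊢
    intro ε hε
    filter_upwards [hsum ε hε] with n hn x hx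
    rw [← hpartial n x, dist_add_right]
    exact hn x hx
  refine ⟨G, hG, fun x hx => ?_, fun x hx => ?_⟩
  · simpa [G] using tsum_of_norm_bounded (hasSum_div_pow_succ hk) (hbound · x hx)
  · have hshift : (fun n => a n (T x)) = fun n => k * a (n + 1) x := by
      ext n
      simp only [ha, iterate_succ_apply, pow_succ]
      field_simp [(by linarith : k ≠ 0)]
    have hTx := hG.tendsto_at (hT hx)
    rw [hshift] at hTx
    exact tendsto_nhds_unique hTx
      (((tendsto_add_atTop_iff_nat 1).mpr (hG.tendsto_at hx)).const_mul k)

end Telescoping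

section Homogeneous

variable {𝕜 L : Type*} [RCLike 𝕜] [NormedAddCommGroup L] [NormedSpace 𝕜 L]
  {H : L → L} {k : ℕ}

theorem log_norm_apply_sub_mul_log_norm_eq (hhom : ∀ (c : 𝕜) (v : L), H (c • v) = c ^ k • H v)
    (hnd : ∀ v, H v = 0 → v = 0) {v : L} (hv : v ≠ 0) :
    Real.log ‖H v‖ - k * Real.log ‖v‖ = Real.log ‖H (((‖v‖⁻¹ : ℝ) : 𝕜) • v)‖ := by
  have hHv : ‖H v‖ ≠ 0 := norm_ne_zero_iff.mpr (mt (hnd v) hv)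
  have hv' : ‖v‖⁻¹ ^ k ≠ 0 := pow_ne_zero _ (inv_ne_zero (norm_ne_zero_iff.mpr hv))
  rw [hhom, norm_smul, norm_pow, RCLike.norm_ofReal, abs_inv, abs_norm,
    Real.log_mul hv' hHv, Real.log_pow, Real.log_inv]
  ring

variable [ProperSpace L]

theorem exists_abs_log_norm_apply_sub_le (hHc : Continuous H)
    (hhom : ∀ (c : 𝕜) (v : L), H (c • v) = c ^ k • H v) (hnd : ∀ v, H v = 0 → v = 0) :
    ∃ M : ℝ, ∀ v ≠ 0, |Real.log ‖H v‖ - k * Real.log ‖v‖| ≤ M := by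
  have hcont : ContinuousOn (fun u => Real.log ‖H u‖) (Metric.sphere (0 : L) 1) := by
    intro u hu
    have hu0 : u ≠ 0 := ne_zero_of_mem_unit_sphere ⟨u, hu⟩
    exact (hHc.norm.continuousAt.log (norm_ne_zero_iff.mpr (mt (hnd u) hu0))).continuousWithinAt
  obtain ⟨M, hM⟩ := (isCompact_sphere (0 : L) 1).exists_bound_of_continuousOn hcont
  refine ⟨M, fun v hv => ?_⟩
  rw [log_norm_apply_sub_mul_log_norm_eq hhom hnd hv]
  refine hM _ ?_
  rw [mem_sphere_zero_iff_norm, norm_smul, RCLike.norm_ofReal, abs_inv, abs_norm,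
    inv_mul_cancel₀ (norm_ne_zero_iff.mpr hv)]

end Homogeneous

/-- **Dynamical Green function of a nondegenerate homogeneous map.**
The functions `G^n v = (1/k^n) log ‖H^[n] v‖` converge uniformly on `L \ {0}` to a
function `G` with `G v = log ‖v‖ + O(1)` and `G (H v) = k • G v`. -/
theorem green_function_exists {L : Type*} [NormedAddCommGroup L] [NormedSpace ℂ L]
    [FiniteDimensional ℂ L] (H : L → L) (hHc : Continuous H) (k : ℕ) (hk : 2 ≤ k)
    (hhom : ∀ (lam : ℂ) (v : L), H (lam • v) = lam ^ k • H v)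
    (hnd : ∀ v, H v = 0 → v = 0) :
    ∃ G : L → ℝ,
      TendstoUniformlyOn (fun n v => (1 / (k : ℝ) ^ n) * Real.log ‖H^[n] v‖) G atTop
        {v : L | v ≠ 0} ∧
      (∃ C : ℝ, ∀ v : L, v ≠ 0 → |G v - Real.log ‖v‖| ≤ C) ∧
      ∀ v : L, v ≠ 0 → G (H v) = (k : ℝ) * G v := by
  obtain ⟨M, hM⟩ := exists_abs_log_norm_apply_sub_le hHc hhom hnd
  have hmaps : MapsTo H {v : L | v ≠ 0} {v : L | v ≠ 0} := fun v hv => mt (hnd v) hv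
  have hk1 : (1 : ℝ) < k := by exact_mod_cast hk
  obtain ⟨G, hG, hbound, hfun⟩ :=
    exists_tendstoUniformlyOn_div_pow_iterate (φ := fun v => Real.log ‖v‖) hmaps hk1 hM
  simp only [one_div_mul_eq_div]
  exact ⟨G, hG, ⟨M / (k - 1), hbound⟩, hfun⟩
end

section
/- Let E = E₁ ⊕ ⋯ ⊕ E_p be a finite-dimensional complex vector space with projections π_j, and let H : (E,0) → (E,0) be an analytic germ. If for each j ∈ [1,p] and all v near 0 the derivative satisfies D_vH(π_j(v)) = k_j · π_j(H(v)) (i.e., DH ∘ ϑ_j = k_j · ϑ_j ∘ H), then H = H₁ ⊕ ⋯ ⊕ H_p where each H_j : E_j → E_j is the germ of a homogeneous map of degree k_j. -/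
/-!
Restricting `H` to the complex line `z ↦ s.piecewise (z • v) v`, which scales the coordinates
in `s`, turns the Euler relations into the one-variable equation `z g'(z) = c g(z)` for each
component. Its solutions on a disc are the monomials `z ^ c • g 1`: after substituting
`z = exp μ`, the function `exp (-c μ) • g (exp μ)` has derivative zero. With `s = {j}` this makes
`w ↦ H (Pi.single j w) j` homogeneous of degree `k j`; with `s` all coordinates but `j` and
`z = 0` it shows that `H v j` only depends on `v j`. A map homogeneous on a ball extends to a
globally homogeneous map by rescaling into the ball.
-/

open Metric

section MonomialODE

variable {F : Type*} [NormedAddCommGroup F] [NormedSpace ℂ F] {g : ℂ → F} {k : ℕ} {R : ℝ}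

lemma apply_exp_eq_exp_mul_smul (hR : 1 < R) (hg : DifferentiableOn ℂ g (ball 0 R))
    (heq : ∀ z ∈ ball (0 : ℂ) R, z • deriv g z = (k : ℂ) • g z) {μ : ℂ}
    (hμ : μ.re < Real.log R) : g (Complex.exp μ) = Complex.exp (k * μ) • g 1 := by
  set P : Set ℂ := {μ : ℂ | μ.re < Real.log R}
  have hP : IsOpen P := isOpen_lt Complex.continuous_re continuous_const
  have hexp_mem : ∀ μ ∈ P, Complex.exp μ ∈ ball (0 : ℂ) R := fun μ hμ => by
    rw [mem_ball_zero_iff, Complex.norm_exp, ← Real.exp_log (by linarith : 0 < R)]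
    exact Real.exp_lt_exp.2 hμ
  set h : ℂ → F := fun μ => Complex.exp (-k * μ) • g (Complex.exp μ)
  have hderiv : ∀ μ ∈ P, HasDerivAt h 0 μ := fun μ hμ => by
    have hgμ := (hg.differentiableAt (isOpen_ball.mem_nhds (hexp_mem μ hμ))).hasDerivAt
    convert (((hasDerivAt_id μ).const_mul (-k : ℂ)).cexp).smul
      (hgμ.scomp μ (Complex.hasDerivAt_exp μ)) using 1
    · rfl
    rw [mul_smul, heq _ (hexp_mem μ hμ), mul_smul, Function.comp_apply, ← smul_add]
    simp
  have hconst : h μ = h 0 :=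
    hP.is_const_of_deriv_eq_zero (convex_halfSpace_re_lt _).isPreconnected
      (fun x hx => (hderiv x hx).differentiableAt.differentiableWithinAt)
      (fun x hx => (hderiv x hx).deriv) hμ (by simpa [P] using Real.log_pos hR)
  simp only [h, mul_zero, Complex.exp_zero, one_smul] at hconst
  rw [← hconst, smul_smul, ← Complex.exp_add]
  simp

lemma eq_pow_smul_of_smul_deriv_eq (hR : 1 < R) (hg : DifferentiableOn ℂ g (ball 0 R))
    (heq : ∀ z ∈ ball (0 : ℂ) R, z • deriv g z = (k : ℂ) • g z) :
    ∀ z ∈ ball (0 : ℂ) R, g z = z ^ k • g 1 := by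
  have hpunct : Set.EqOn g (fun z => z ^ k • g 1) (ball 0 R ∩ {0}ᶜ) := by
    rintro z ⟨hz, hz0 : z ≠ 0⟩
    have hlog : (Complex.log z).re < Real.log R := by
      rw [Complex.log_re]
      exact Real.log_lt_log (norm_pos_iff.2 hz0) (mem_ball_zero_iff.1 hz)
    simpa [Complex.exp_log hz0, Complex.exp_nat_mul] using
      apply_exp_eq_exp_mul_smul hR hg heq hlog
  refine hpunct.of_subset_closure hg.continuousOn (by fun_prop) Set.inter_subset_left ?_
  calc ball (0 : ℂ) R = ball 0 R ∩ closure {0}ᶜ := by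
        rw [closure_compl_singleton, Set.inter_univ]
    _ ⊆ closure (ball 0 R ∩ {0}ᶜ) := isOpen_ball.inter_closure

end MonomialODE

section Piecewise

variable {ι : Type*} [DecidableEq ι] {E : ι → Type*} [∀ i, NormedAddCommGroup (E i)]

lemma norm_piecewise_zero_le [Fintype ι] (s : Finset ι) (v : ∀ i, E i) :
    ‖s.piecewise v 0‖ ≤ ‖v‖ :=
  pi_norm_le_iff_of_nonneg (norm_nonneg _) |>.2 fun i => by
    by_cases hi : i ∈ s
    · simpa [hi] using norm_le_pi_norm v i
    · simp [hi]

variable [∀ i, NormedSpace ℂ (E i)]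

lemma piecewise_smul_self_eq_add (s : Finset ι) (v : ∀ i, E i) (z : ℂ) :
    s.piecewise (z • v) v = s.piecewise (0 : ∀ i, E i) v + z • s.piecewise v 0 := by
  ext i
  by_cases hi : i ∈ s <;> simp [hi]

lemma piecewise_piecewise_smul_self_zero (s : Finset ι) (v : ∀ i, E i) (z : ℂ) :
    s.piecewise (s.piecewise (z • v) v) 0 = z • s.piecewise v 0 := by
  ext i
  by_cases hi : i ∈ s <;> simp [hi]

variable [Fintype ι]

lemma piecewise_smul_self_mem_ball {r : ℝ} {s : Finset ι} {v : ∀ i, E i}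
    (hv : v ∈ ball 0 r) {z : ℂ} (hz : ‖z‖ * ‖s.piecewise v 0‖ < r) :
    s.piecewise (z • v) v ∈ ball 0 r := by
  rw [mem_ball_zero_iff] at hv ⊢
  refine (pi_norm_lt_iff ((norm_nonneg v).trans_lt hv)).2 fun i => ?_
  by_cases hi : i ∈ s
  · calc ‖s.piecewise (z • v) v i‖ = ‖z‖ * ‖s.piecewise v 0 i‖ := by
          simp [hi, norm_smul]
      _ ≤ ‖z‖ * ‖s.piecewise v 0‖ := by gcongr; exact norm_le_pi_norm _ i
      _ < r := hz
  · simpa [hi] using (norm_le_pi_norm v i).trans_lt hv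

end Piecewise

section Euler

variable {ι : Type*} [Fintype ι] [DecidableEq ι] {E : ι → Type*}
  [∀ i, NormedAddCommGroup (E i)] [∀ i, NormedSpace ℂ (E i)]
  {H : (∀ i, E i) → (∀ i, E i)} {r : ℝ}

lemma hasDerivAt_apply_piecewise_smul_self (hH : DifferentiableOn ℂ H (ball 0 r))
    (s : Finset ι) (m : ι) (v : ∀ i, E i) {w : ℂ}
    (hw : s.piecewise (w • v) v ∈ ball 0 r) :
    HasDerivAt (fun w : ℂ => H (s.piecewise (w • v) v) m)
      (fderiv ℂ H (s.piecewise (w • v) v) (s.piecewise v 0) m) w := by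
  have hline : HasDerivAt (fun w : ℂ => s.piecewise (w • v) v) (s.piecewise v 0) w := by
    simp_rw [piecewise_smul_self_eq_add]
    simpa using ((hasDerivAt_id w).smul_const _).const_add (s.piecewise (0 : ∀ i, E i) v)
  have hHw := (hH.differentiableAt (isOpen_ball.mem_nhds hw)).hasFDerivAt
  exact hasDerivAt_pi.1 (hHw.comp_hasDerivAt w hline) m

lemma apply_piecewise_smul_self_eq_pow_smul (hH : DifferentiableOn ℂ H (ball 0 r))
    {s : Finset ι} {m : ι} {c : ℕ}
    (heul : ∀ x ∈ ball (0 : ∀ i, E i) r,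
      fderiv ℂ H x (s.piecewise x 0) m = (c : ℂ) • H x m)
    {v : ∀ i, E i} (hv : v ∈ ball 0 r) {z : ℂ} (hz : s.piecewise (z • v) v ∈ ball 0 r) :
    H (s.piecewise (z • v) v) m = z ^ c • H v m := by
  set u := s.piecewise v 0 with hu_def
  rcases eq_or_ne u 0 with hu | hu
  · have hconst : s.piecewise (z • v) v = v := by
      have hv_eq := piecewise_smul_self_eq_add s v 1
      rw [one_smul, Finset.piecewise_same, ← hu_def, hu, smul_zero, add_zero] at hv_eq
      rw [piecewise_smul_self_eq_add, ← hu_def, hu, smul_zero, add_zero, ← hv_eq]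
    have hcH : (c : ℂ) • H v m = 0 := by
      rw [← heul v hv, ← hu_def, hu, map_zero, Pi.zero_apply]
    rcases smul_eq_zero.1 hcH with hc | hHv
    · simp [hconst, Nat.cast_eq_zero.1 hc]
    · simp [hconst, hHv]
  have hu_pos : 0 < ‖u‖ := norm_pos_iff.2 hu
  have hR : 1 < r / ‖u‖ :=
    (one_lt_div hu_pos).2 ((norm_piecewise_zero_le s v).trans_lt (mem_ball_zero_iff.1 hv))
  have hmem : ∀ w ∈ ball (0 : ℂ) (r / ‖u‖), s.piecewise (w • v) v ∈ ball 0 r :=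
    fun w hw => piecewise_smul_self_mem_ball hv <| by
      rwa [mem_ball_zero_iff, lt_div_iff₀ hu_pos] at hw
  have hz' : z ∈ ball (0 : ℂ) (r / ‖u‖) := by
    rw [mem_ball_zero_iff, lt_div_iff₀ hu_pos, ← norm_smul,
      ← piecewise_piecewise_smul_self_zero]
    exact (norm_piecewise_zero_le s _).trans_lt (mem_ball_zero_iff.1 hz)
  have hode : ∀ w ∈ ball (0 : ℂ) (r / ‖u‖),
      w • deriv (fun w : ℂ => H (s.piecewise (w • v) v) m) w
        = (c : ℂ) • H (s.piecewise (w • v) v) m := fun w hw => by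
    rw [(hasDerivAt_apply_piecewise_smul_self hH s m v (hmem w hw)).deriv, ← Pi.smul_apply,
      ← map_smul, ← piecewise_piecewise_smul_self_zero, heul _ (hmem w hw)]
  have := eq_pow_smul_of_smul_deriv_eq hR (fun w hw =>
    (hasDerivAt_apply_piecewise_smul_self hH s m v (hmem w hw)).differentiableAt
      |>.differentiableWithinAt) hode z hz'
  simpa [Finset.piecewise_same] using this

lemma fderiv_apply_piecewise_self {k : ι → ℕ}
    (heuler : ∀ v ∈ ball (0 : ∀ i, E i) r, ∀ j,
      fderiv ℂ H v (Pi.single j (v j)) = (k j : ℂ) • Pi.single j (H v j))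
    {x : ∀ i, E i} (hx : x ∈ ball 0 r) (s : Finset ι) :
    fderiv ℂ H x (s.piecewise x 0) = ∑ i ∈ s, (k i : ℂ) • Pi.single i (H x i) := by
  have hsum : s.piecewise x 0 = ∑ i ∈ s, Pi.single i (x i) := by
    ext j
    by_cases hj : j ∈ s <;> simp [hj]
  rw [hsum, map_sum]
  exact Finset.sum_congr rfl fun i _ => heuler x hx i

lemma apply_single_smul_eq_pow_smul {k : ι → ℕ}
    (heuler : ∀ v ∈ ball (0 : ∀ i, E i) r, ∀ j,
      fderiv ℂ H v (Pi.single j (v j)) = (k j : ℂ) • Pi.single j (H v j))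
    (hH : DifferentiableOn ℂ H (ball 0 r)) {j : ι} {w : E j}
    (hw : ‖w‖ < r) {z : ℂ} (hz : ‖z • w‖ < r) :
    H (Pi.single j (z • w)) j = z ^ k j • H (Pi.single j w) j := by
  have hpw : ({j} : Finset ι).piecewise (z • Pi.single j w) (Pi.single j w)
      = Pi.single j (z • w) := by
    rw [Finset.piecewise_singleton]
    simp [Pi.single, Function.update_idem]
  have heul : ∀ x ∈ ball (0 : ∀ i, E i) r,
      fderiv ℂ H x (({j} : Finset ι).piecewise x 0) j = (k j : ℂ) • H x j := by
    intro x hx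
    rw [fderiv_apply_piecewise_self heuler hx]
    simp
  rw [← hpw]
  exact apply_piecewise_smul_self_eq_pow_smul hH heul
    (by rwa [mem_ball_zero_iff, Pi.norm_single])
    (by rwa [hpw, mem_ball_zero_iff, Pi.norm_single])

lemma apply_eq_apply_single {k : ι → ℕ}
    (heuler : ∀ v ∈ ball (0 : ∀ i, E i) r, ∀ j,
      fderiv ℂ H v (Pi.single j (v j)) = (k j : ℂ) • Pi.single j (H v j))
    (hH : DifferentiableOn ℂ H (ball 0 r)) {v : ∀ i, E i}
    (hv : v ∈ ball 0 r) (j : ι) : H v j = H (Pi.single j (v j)) j := by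
  have hpw : (Finset.univ.erase j).piecewise ((0 : ℂ) • v) v = Pi.single j (v j) := by
    ext i
    by_cases hi : i = j
    · subst hi; simp
    · simp [hi]
  have heul : ∀ x ∈ ball (0 : ∀ i, E i) r,
      fderiv ℂ H x ((Finset.univ.erase j).piecewise x 0) j = ((0 : ℕ) : ℂ) • H x j := by
    intro x hx
    rw [fderiv_apply_piecewise_self heuler hx, Finset.sum_apply, Nat.cast_zero, zero_smul]
    refine Finset.sum_eq_zero fun i hi => ?_
    simp [(Finset.ne_of_mem_erase hi).symm]
  have hmem : Pi.single j (v j) ∈ ball 0 r := by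
    rw [mem_ball_zero_iff, Pi.norm_single]
    exact (norm_le_pi_norm v j).trans_lt (mem_ball_zero_iff.1 hv)
  have := apply_piecewise_smul_self_eq_pow_smul hH heul hv (hpw ▸ hmem)
  rw [hpw, pow_zero, one_smul] at this
  exact this.symm

end Euler

lemma exists_homogeneous_eqOn_ball {F G : Type*} [NormedAddCommGroup F] [NormedSpace ℂ F]
    [AddCommGroup G] [Module ℂ G] (f : F → G) (c : ℕ) {r : ℝ} (hr : 0 < r)
    (hf : ∀ w : F, ‖w‖ < r → ∀ z : ℂ, ‖z • w‖ < r → f (z • w) = z ^ c • f w) :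
    ∃ f' : F → G, (∀ (z : ℂ) (w : F), f' (z • w) = z ^ c • f' w) ∧
      ∀ w : F, ‖w‖ < r → f' w = f w := by
  set t : F → ℂ := fun w => ((r / (‖w‖ + r) : ℝ) : ℂ)
  have ht0 : ∀ w, t w ≠ 0 := fun w => Complex.ofReal_ne_zero.2 (by positivity)
  have htw : ∀ w, ‖t w • w‖ < r := fun w => by
    rw [norm_smul, Complex.norm_real, Real.norm_of_nonneg (by positivity), div_mul_eq_mul_div,
      div_lt_iff₀ (by positivity)]
    nlinarith [norm_nonneg w]
  refine ⟨fun w => (t w)⁻¹ ^ c • f (t w • w), fun z w => ?_, fun w hw => ?_⟩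
  · have hrescale : t (z • w) • z • w = (t (z • w) * z / t w) • t w • w := by
      rw [smul_smul, smul_smul]
      congr 1
      field_simp [ht0 w]
    simp only
    rw [hrescale, hf _ (htw w) _ (hrescale ▸ htw _), smul_smul, smul_smul, ← mul_pow,
      ← mul_pow]
    congr 2
    field_simp [ht0 w, ht0 (z • w)]
  · simp only
    rw [hf w hw _ (htw w), smul_smul, ← mul_pow, inv_mul_cancel₀ (ht0 w), one_pow, one_smul]

theorem quasihomogeneous_of_euler_general {p : ℕ} {E : Fin p → Type*}
    [∀ j, NormedAddCommGroup (E j)] [∀ j, NormedSpace ℂ (E j)]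
    (k : Fin p → ℕ)
    (H : (∀ j, E j) → (∀ j, E j)) (r : ℝ) (hr : 0 < r)
    (hHa : AnalyticOnNhd ℂ H (ball (0 : ∀ j, E j) r))
    (heuler : ∀ v ∈ ball (0 : ∀ j, E j) r, ∀ j,
      fderiv ℂ H v (Pi.single j (v j)) = (k j : ℂ) • Pi.single j (H v j)) :
    ∃ r' > 0, r' ≤ r ∧ ∃ H' : ∀ j, E j → E j,
      (∀ j, ∀ (lam : ℂ) (w : E j), H' j (lam • w) = lam ^ (k j) • H' j w) ∧
      ∀ v ∈ ball (0 : ∀ j, E j) r', H v = fun j => H' j (v j) := by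
  have hH := hHa.differentiableOn
  choose H' hH'_hom hH'_eq using fun j => exists_homogeneous_eqOn_ball
    (fun w : E j => H (Pi.single j w) j) (k j) hr
    (fun w hw z hz => apply_single_smul_eq_pow_smul heuler hH hw hz)
  refine ⟨r, hr, le_rfl, H', hH'_hom, fun v hv => funext fun j => ?_⟩
  rw [apply_eq_apply_single heuler hH hv j,
    hH'_eq j (v j) ((norm_le_pi_norm v j).trans_lt (mem_ball_zero_iff.1 hv))]

/-- If an analytic germ `H : (E,0) → (E,0)` on `E = E₁ ⊕ ⋯ ⊕ E_p` satisfies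
`D_v H (π_j v) = k_j • π_j (H v)` for all `j` and all `v` near `0`, then
`H = H₁ ⊕ ⋯ ⊕ H_p` near `0` with each `H_j : E_j → E_j` homogeneous of degree `k_j`. -/
theorem quasihomogeneous_of_euler {p : ℕ} {E : Fin p → Type*}
    [∀ j, NormedAddCommGroup (E j)] [∀ j, NormedSpace ℂ (E j)]
    [∀ j, FiniteDimensional ℂ (E j)]
    (k : Fin p → ℕ) (hk : ∀ j, 1 ≤ k j)
    (H : (∀ j, E j) → (∀ j, E j)) (r : ℝ) (hr : 0 < r)
    (hHa : AnalyticOnNhd ℂ H (ball (0 : ∀ j, E j) r)) (hH0 : H 0 = 0)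
    (heuler : ∀ v ∈ ball (0 : ∀ j, E j) r, ∀ j,
      fderiv ℂ H v (Pi.single j (v j)) = (k j : ℂ) • Pi.single j (H v j)) :
    ∃ r' > 0, r' ≤ r ∧ ∃ H' : ∀ j, E j → E j,
      (∀ j, ∀ (lam : ℂ) (w : E j), H' j (lam • w) = lam ^ (k j) • H' j w) ∧
      ∀ v ∈ ball (0 : ∀ j, E j) r', H v = fun j => H' j (v j) :=
  quasihomogeneous_of_euler_general k H r hr hHa heuler
end

section
/- Let H = H₁ ⊕ ⋯ ⊕ H_p be quasihomogeneous on E = E₁ ⊕ ⋯ ⊕ E_p with multidegree (k₁,…,k_p), all k_j ≥ 2. Fix j and let E_j^⊤ = {v : π_j(v) = 0}. Suppose X ⊆ E is a set such that near 0, H^{-1}(X) coincides with the graph of an analytic function φ : (E_j^⊤, 0) → (E_j, 0). Then φ ≡ 0 near 0, i.e., X = H^{-1}(X) = E_j^⊤ near 0. -/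
/-!
Each `H_i` is homogeneous of degree `k_i`, so `H` is unchanged when the `j`-th coordinate is
multiplied by a primitive `k_j`-th root of unity `ζ ≠ 1`. Hence `H⁻¹(X)`, and with it the
graph of `φ`, is invariant under this rotation: together with the point `(u, φ u)` of the graph
it contains `(u, ζ • φ u)`, so `ζ • φ u = φ u` and `φ u = 0`. Continuity of `φ` at `0` keeps
both points inside the ball on which `H⁻¹(X)` is the graph.
-/

open Metric Function

section UpdateNorm

variable {ι : Type*} [Fintype ι] [DecidableEq ι] {E : ι → Type*}
  [∀ i, SeminormedAddCommGroup (E i)]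

theorem norm_update_zero_le (v : ∀ i, E i) (j : ι) : ‖update v j 0‖ ≤ ‖v‖ :=
  (pi_norm_le_iff_of_nonneg (norm_nonneg v)).mpr fun i => by
    rcases eq_or_ne i j with rfl | hij
    · simp
    · simpa [update_of_ne hij] using norm_le_pi_norm v i

theorem update_mem_ball_zero {v : ∀ i, E i} {r : ℝ} (hv : v ∈ ball 0 r) {j : ι} {c : E j}
    (hc : ‖c‖ < r) : update v j c ∈ ball 0 r := by
  rw [mem_ball_zero_iff] at hv ⊢
  refine (pi_norm_lt_iff ((norm_nonneg v).trans_lt hv)).mpr fun i => ?_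
  rcases eq_or_ne i j with rfl | hij
  · simpa using hc
  · simpa [update_of_ne hij] using (norm_le_pi_norm v i).trans_lt hv

end UpdateNorm

section Graph

variable {ι : Type*} [Fintype ι] [DecidableEq ι] {E : ι → Type*}
  [∀ i, SeminormedAddCommGroup (E i)] {Y : Type*} {H : (∀ i, E i) → Y} {X : Set Y}
  {j : ι} {φ : (∀ i, E i) → E j} {r : ℝ}

theorem apply_eq_of_graph_of_invariant {g : E j → E j} (hg : ∀ c, ‖g c‖ = ‖c‖)
    (hHg : ∀ v c, H (update v j (g c)) = H (update v j c))
    (hgraph : ∀ v ∈ ball (0 : ∀ i, E i) r, (H v ∈ X ↔ v j = φ (update v j 0)))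
    {v : ∀ i, E i} (hv : v ∈ ball 0 r) (hφv : ‖φ (update v j 0)‖ < r) :
    g (φ (update v j 0)) = φ (update v j 0) := by
  have hw : H (update v j (φ (update v j 0))) ∈ X := by
    rw [hgraph _ (update_mem_ball_zero hv hφv), update_idem, update_self]
  have hgw := (hgraph _ (update_mem_ball_zero hv ((hg _).trans_lt hφv))).mp
    ((hHg v _).symm ▸ hw)
  rwa [update_idem, update_self] at hgw

end Graph

theorem preimage_graph_is_hyperplane_general {p : ℕ} {E : Fin p → Type*}
    [∀ i, NormedAddCommGroup (E i)] [∀ i, NormedSpace ℂ (E i)]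
    (k : Fin p → ℕ) (hk : ∀ i, 2 ≤ k i)
    (Hj : ∀ i, E i → E i)
    (hhom : ∀ i, ∀ (lam : ℂ) (w : E i), Hj i (lam • w) = lam ^ (k i) • Hj i w)
    (H : (∀ i, E i) → (∀ i, E i)) (hH : ∀ v, H v = fun i => Hj i (v i))
    (j : Fin p) (X : Set (∀ i, E i))
    (φ : (∀ i, E i) → E j) (r : ℝ) (hr : 0 < r)
    (hφa : AnalyticOnNhd ℂ φ (ball (0 : ∀ i, E i) r)) (hφ0 : φ 0 = 0)
    (hgraph : ∀ v ∈ ball (0 : ∀ i, E i) r,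
      (H v ∈ X ↔ v j = φ (Function.update v j 0))) :
    ∃ r' > 0, r' ≤ r ∧
      (∀ v ∈ ball (0 : ∀ i, E i) r', φ (Function.update v j 0) = 0) ∧
      ∀ v ∈ ball (0 : ∀ i, E i) r', (H v ∈ X ↔ v j = 0) := by
  have hkj : k j ≠ 0 := by have := hk j; omega
  have hζ := Complex.isPrimitiveRoot_exp (k j) hkj
  set ζ := Complex.exp (2 * Real.pi * Complex.I / k j)
  have hζne : ζ ≠ 1 := hζ.ne_one (hk j)
  have hHrot : ∀ v c, H (update v j (ζ • c)) = H (update v j c) := fun v c => by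
    rw [hH, hH, funext (apply_update Hj v j _), funext (apply_update Hj v j c), hhom,
      hζ.pow_eq_one, one_smul]
  obtain ⟨δ, hδ, hφδ⟩ :=
    Metric.continuousAt_iff.mp (hφa 0 (mem_ball_self hr)).continuousAt r hr
  have hflat : ∀ v ∈ ball (0 : ∀ i, E i) (min r δ), φ (update v j 0) = 0 := fun v hv => by
    rw [mem_ball_zero_iff, lt_min_iff] at hv
    have hsmall : ‖φ (update v j 0)‖ < r := by
      simpa [hφ0] using hφδ (by simpa using (norm_update_zero_le v j).trans_lt hv.2)
    have hfix := apply_eq_of_graph_of_invariant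
      (fun c => by rw [norm_smul, hζ.norm'_eq_one hkj, one_mul])
      hHrot hgraph (mem_ball_zero_iff.mpr hv.1) hsmall
    by_contra hne
    exact hζne (smul_left_injective ℂ hne (hfix.trans (one_smul ℂ _).symm))
  refine ⟨min r δ, lt_min hr hδ, min_le_left r δ, hflat, fun v hv => ?_⟩
  rw [hgraph v (ball_subset_ball (min_le_left r δ) hv), hflat v hv]

/-- Let `H = H₁ ⊕ ⋯ ⊕ H_p` be quasihomogeneous of multidegree `(k₁,…,k_p)`, all
`k_j ≥ 2`. If, near `0`, `H⁻¹(X)` coincides with the graph of an analytic map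
`φ : (E_j^⊤, 0) → (E_j, 0)`, then `φ ≡ 0` near `0`; i.e. `H⁻¹(X) = E_j^⊤` near `0`. -/
theorem preimage_graph_is_hyperplane {p : ℕ} {E : Fin p → Type*}
    [∀ i, NormedAddCommGroup (E i)] [∀ i, NormedSpace ℂ (E i)]
    [∀ i, FiniteDimensional ℂ (E i)]
    (k : Fin p → ℕ) (hk : ∀ i, 2 ≤ k i)
    (Hj : ∀ i, E i → E i)
    (hhom : ∀ i, ∀ (lam : ℂ) (w : E i), Hj i (lam • w) = lam ^ (k i) • Hj i w)
    (H : (∀ i, E i) → (∀ i, E i)) (hH : ∀ v, H v = fun i => Hj i (v i))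
    (j : Fin p) (X : Set (∀ i, E i))
    (φ : (∀ i, E i) → E j) (r : ℝ) (hr : 0 < r)
    (hφa : AnalyticOnNhd ℂ φ (ball (0 : ∀ i, E i) r)) (hφ0 : φ 0 = 0)
    (hgraph : ∀ v ∈ ball (0 : ∀ i, E i) r,
      (H v ∈ X ↔ v j = φ (Function.update v j 0))) :
    ∃ r' > 0, r' ≤ r ∧
      (∀ v ∈ ball (0 : ∀ i, E i) r', φ (Function.update v j 0) = 0) ∧
      ∀ v ∈ ball (0 : ∀ i, E i) r', (H v ∈ X ↔ v j = 0) :=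
  preimage_graph_is_hyperplane_general k hk Hj hhom H hH j X φ r hr hφa hφ0 hgraph
end

section
/- Let F : (E,0) → (E,0) be an analytic germ with an adapted superattracting fixed point of multidegree (k₁,…,k_p), i.e., π_j ∘ F(v) = H_j(π_j(v)) + O(‖v‖·‖π_j(v)‖^{k_j}) with H_j : E_j → E_j nondegenerate homogeneous of degree k_j ≥ 2. Then for each j the subspace E_j^⊤ = {v : π_j(v) = 0} is locally totally invariant: there is a neighborhood V of 0 with F^{-1}(E_j^⊤) ∩ V = E_j^⊤ ∩ V. -/
/-!
Homogeneity and compactness of the unit sphere give `c * ‖w‖ ^ k ≤ ‖H w‖` for some `c > 0`.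
Because of the factor `‖v‖ → 0`, the error term `F v j - H_j (v j)` is `o(‖v j‖ ^ k)`, hence
near `0` it is dominated by `H_j (v j)`: so `F v j` vanishes exactly when `v j` does.
-/

open Metric Filter Asymptotics Topology

section Homogeneous

variable {𝕜 V W : Type*} [RCLike 𝕜] [NormedAddCommGroup V] [NormedSpace 𝕜 V]
  [NormedAddCommGroup W] [NormedSpace 𝕜 W] {H : V → W} {k : ℕ}

theorem map_zero_of_homogeneous (hhom : ∀ (t : 𝕜) w, H (t • w) = t ^ k • H w) (hk : k ≠ 0) :
    H 0 = 0 := by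
  simpa [zero_pow hk] using hhom 0 0

theorem norm_map_eq_norm_pow_mul (hhom : ∀ (t : 𝕜) w, H (t • w) = t ^ k • H w) {w : V}
    (hw : w ≠ 0) : ‖H w‖ = ‖w‖ ^ k * ‖H ((‖w‖ : 𝕜)⁻¹ • w)‖ := by
  have hw' : (‖w‖ : 𝕜) ≠ 0 := RCLike.ofReal_ne_zero.2 (norm_ne_zero_iff.2 hw)
  conv_lhs => rw [← smul_inv_smul₀ hw' w, hhom]
  rw [norm_smul, norm_pow, RCLike.norm_ofReal, abs_norm]

theorem exists_pos_mul_norm_pow_le_norm_of_homogeneous [ProperSpace V] (hHc : Continuous H)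
    (hhom : ∀ (t : 𝕜) w, H (t • w) = t ^ k • H w) (hnd : ∀ w, H w = 0 → w = 0) (hk : k ≠ 0) :
    ∃ c > 0, ∀ w, c * ‖w‖ ^ k ≤ ‖H w‖ := by
  rcases subsingleton_or_nontrivial V with hV | hV
  · exact ⟨1, one_pos, fun w => by simp [Subsingleton.elim w 0, zero_pow hk]⟩
  obtain ⟨w₀, hw₀⟩ := exists_ne (0 : V)
  have hsphere : ((‖w₀‖ : 𝕜)⁻¹ • w₀) ∈ sphere (0 : V) 1 := by
    simpa using norm_smul_inv_norm (𝕜 := 𝕜) hw₀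
  obtain ⟨u, hu, hmin⟩ := (isCompact_sphere (0 : V) 1).exists_isMinOn ⟨_, hsphere⟩
    hHc.norm.continuousOn
  have hu0 : u ≠ 0 := ne_zero_of_mem_unit_sphere ⟨u, hu⟩
  refine ⟨‖H u‖, norm_pos_iff.2 (mt (hnd u) hu0), fun w => ?_⟩
  rcases eq_or_ne w 0 with rfl | hw
  · simp [zero_pow hk]
  rw [norm_map_eq_norm_pow_mul hhom hw, mul_comm]
  gcongr
  exact hmin (by simpa using norm_smul_inv_norm (𝕜 := 𝕜) hw)

end Homogeneous

theorem isLittleO_mul_of_tendsto_zero {α : Type*} {l : Filter α} {u g : α → ℝ}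
    (hu : Tendsto u l (𝓝 0)) : (fun x => u x * g x) =o[l] g := by
  simpa using (isLittleO_one_iff ℝ).2 hu |>.mul_isBigO (isBigO_refl g l)

theorem eventually_eq_zero_iff_of_isLittleO {α Y Z : Type*} [NormedAddCommGroup Y]
    [NormedAddCommGroup Z] {l : Filter α} {f : α → Z} {g : α → Y} {H : Y → Z} {k : ℕ} {c : ℝ}
    (hc : 0 < c) (hlow : ∀ y, c * ‖y‖ ^ k ≤ ‖H y‖) (hH0 : H 0 = 0) (hk : k ≠ 0)
    (hfg : (fun x => f x - H (g x)) =o[l] fun x => ‖g x‖ ^ k) :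
    ∀ᶠ x in l, f x = 0 ↔ g x = 0 := by
  filter_upwards [hfg.def (half_pos hc)] with x hx
  rw [norm_pow, norm_norm] at hx
  constructor
  · intro hf
    rw [hf, zero_sub, norm_neg] at hx
    have hpow : ‖g x‖ ^ k ≤ 0 := by nlinarith [hlow (g x)]
    exact norm_eq_zero.1 (pow_eq_zero_iff hk |>.1 (le_antisymm hpow (by positivity)))
  · intro hg
    rw [hg, norm_zero, zero_pow hk, mul_zero, hH0, sub_zero] at hx
    exact norm_le_zero_iff.1 hx

theorem hyperplane_locally_totally_invariant_general {p : ℕ} {E : Fin p → Type*}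
    [∀ i, NormedAddCommGroup (E i)] [∀ i, NormedSpace ℂ (E i)]
    [∀ i, FiniteDimensional ℂ (E i)]
    (k : Fin p → ℕ) (hk : ∀ i, 2 ≤ k i)
    (F : (∀ i, E i) → (∀ i, E i))
    (Hj : ∀ i, E i → E i) (hHc : ∀ i, Continuous (Hj i))
    (hhom : ∀ i, ∀ (lam : ℂ) (w : E i), Hj i (lam • w) = lam ^ (k i) • Hj i w)
    (hnd : ∀ i, ∀ w : E i, Hj i w = 0 → w = 0)
    (hadapted : ∀ i, (fun v : ∀ i', E i' => F v i - Hj i (v i))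
      =O[nhds (0 : ∀ i', E i')] fun v => ‖v‖ * ‖v i‖ ^ (k i)) :
    ∀ j : Fin p, ∃ V ∈ nhds (0 : ∀ i, E i), ∀ v ∈ V, (F v j = 0 ↔ v j = 0) := by
  intro j
  have hkj : k j ≠ 0 := by have := hk j; omega
  obtain ⟨c, hc, hlow⟩ :=
    exists_pos_mul_norm_pow_le_norm_of_homogeneous (hHc j) (hhom j) (hnd j) hkj
  have hsmall := (hadapted j).trans_isLittleO
    (isLittleO_mul_of_tendsto_zero (g := fun v : ∀ i, E i => ‖v j‖ ^ k j) tendsto_norm_zero)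
  exact (eventually_eq_zero_iff_of_isLittleO hc hlow
    (map_zero_of_homogeneous (hhom j) hkj) hkj hsmall).exists_mem

/-- If `F : (E,0) → (E,0)` has an adapted superattracting fixed point, i.e.
`π_j ∘ F (v) = H_j (π_j v) + O(‖v‖ · ‖π_j v‖^(k_j))` with `H_j` nondegenerate
homogeneous of degree `k_j ≥ 2`, then each hyperplane `E_j^⊤ = {v : π_j v = 0}`
is locally totally invariant: `F⁻¹(E_j^⊤) ∩ V = E_j^⊤ ∩ V` for some neighborhood
`V` of `0`. -/
theorem hyperplane_locally_totally_invariant {p : ℕ} {E : Fin p → Type*}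
    [∀ i, NormedAddCommGroup (E i)] [∀ i, NormedSpace ℂ (E i)]
    [∀ i, FiniteDimensional ℂ (E i)]
    (k : Fin p → ℕ) (hk : ∀ i, 2 ≤ k i)
    (F : (∀ i, E i) → (∀ i, E i)) (r : ℝ) (hr : 0 < r)
    (hFa : AnalyticOnNhd ℂ F (ball (0 : ∀ i, E i) r)) (hF0 : F 0 = 0)
    (Hj : ∀ i, E i → E i) (hHc : ∀ i, Continuous (Hj i))
    (hhom : ∀ i, ∀ (lam : ℂ) (w : E i), Hj i (lam • w) = lam ^ (k i) • Hj i w)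
    (hnd : ∀ i, ∀ w : E i, Hj i w = 0 → w = 0)
    (hadapted : ∀ i, (fun v : ∀ i', E i' => F v i - Hj i (v i))
      =O[nhds (0 : ∀ i', E i')] fun v => ‖v‖ * ‖v i‖ ^ (k i)) :
    ∀ j : Fin p, ∃ V ∈ nhds (0 : ∀ i, E i), ∀ v ∈ V, (F v j = 0 ↔ v j = 0) :=
  hyperplane_locally_totally_invariant_general k hk F Hj hHc hhom hnd hadapted
end

section
/- Poincaré linearization: Let ξ be an analytic vector field defined near 0 in a finite-dimensional complex vector space E with ξ(v) = v + o(‖v‖) (asymptotically radial). Then ξ is linearizable: there exists an analytic germ Φ : (E,0) → (E,0) with Φ(0) = 0, D₀Φ = id, and D_vΦ(ξ(v)) = Φ(v) for all v near 0. -/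
/-!
Rather than `Φ`, construct its inverse `Ψ`, which carries the radial field to `ξ`:
`DΨ(w) w = ξ(Ψ(w))`. If `p` is the power series of `ξ` (with `p₀ = 0`, `p₁ = id`) and `q` that of
`Ψ` (with `q₀ = 0`, `q₁ = id`), comparing terms of degree `n` gives
`n qₙ = qₙ + ∑ p_k(q_{i₁}, …, q_{i_k})` over compositions `i₁ + ⋯ + i_k = n` with `k ≥ 2`,
which determines `qₙ` from lower coefficients. The divisors `n - 1` are at least `1`, so there are
no small divisors, and the majorant argument giving convergence of the inverse of a power series
shows that `q` converges. By the analytic inverse function theorem `Φ := Ψ⁻¹` is analytic, and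
differentiating `Φ ∘ Ψ = id` at `Φ(v)` turns `DΨ(Φ v)(Φ v) = ξ(v)` into `DΦ(v)(ξ v) = Φ(v)`.
-/

open Metric Filter Finset
open scoped Topology

theorem sum_pow_mul_le_of_le_sum_compositions {Q : ℕ → ℝ} (hQ : ∀ k, 0 ≤ Q k) {C r a : ℝ}
    (hC : 0 ≤ C) (hr : 0 ≤ r) (ha : 0 ≤ a)
    (hrec : ∀ n, 2 ≤ n → Q n ≤ C * ∑ c ∈ {c : Composition n | 1 < c.length}.toFinset,
      r ^ c.length * ∏ j, Q (c.blocksFun j))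
    {n : ℕ} (hn : 1 ≤ n) :
    ∑ k ∈ Ico 1 (n + 1), a ^ k * Q k ≤
      a * Q 1 + C * ∑ k ∈ Ico 2 (n + 1), (r * ∑ j ∈ Ico 1 n, a ^ j * Q j) ^ k := by
  calc ∑ k ∈ Ico 1 (n + 1), a ^ k * Q k
      = a * Q 1 + ∑ k ∈ Ico 2 (n + 1), a ^ k * Q k := by
        rw [← sum_Ico_consecutive _ one_le_two (by omega),
          show Ico 1 2 = {1} from Nat.Ico_succ_singleton 1, sum_singleton, pow_one]
    _ ≤ a * Q 1 + ∑ k ∈ Ico 2 (n + 1), a ^ k *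
          (C * ∑ c ∈ {c : Composition k | 1 < c.length}.toFinset,
            r ^ c.length * ∏ j, Q (c.blocksFun j)) := by
        gcongr with k hk
        exact hrec k (mem_Ico.1 hk).1
    _ = a * Q 1 + C * ∑ k ∈ Ico 2 (n + 1), a ^ k *
          ∑ c ∈ {c : Composition k | 1 < c.length}.toFinset,
            r ^ c.length * ∏ j, Q (c.blocksFun j) := by
        rw [mul_sum]
        congr 1
        exact sum_congr rfl fun k _ => by ring
    _ ≤ a * Q 1 + C * ∑ k ∈ Ico 2 (n + 1), (r * ∑ j ∈ Ico 1 n, a ^ j * Q j) ^ k := by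
        gcongr _ + C * ?_
        simp_rw [mul_pow]
        exact FormalMultilinearSeries.radius_right_inv_pos_of_radius_pos_aux1 n Q hQ hr ha

theorem exists_pos_pow_mul_le_of_le_sum_compositions {Q : ℕ → ℝ} (hQ : ∀ k, 0 ≤ Q k) {C r : ℝ}
    (hC : 0 ≤ C) (hr : 0 ≤ r)
    (hrec : ∀ n, 2 ≤ n → Q n ≤ C * ∑ c ∈ {c : Composition n | 1 < c.length}.toFinset,
      r ^ c.length * ∏ j, Q (c.blocksFun j)) :
    ∃ a > 0, ∀ n, 1 ≤ n → a ^ n * Q n ≤ (Q 1 + 1) * a := by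
  set D := r * (Q 1 + 1)
  have hD : 0 ≤ D := mul_nonneg hr (by linarith [hQ 1])
  set a := 1 / (2 * D + 2 * C * D ^ 2 + 1)
  have hden : 0 < 2 * D + 2 * C * D ^ 2 + 1 := by positivity
  have ha : 0 < a := by positivity
  have hDa : D * a ≤ 1 / 2 := by
    rw [mul_one_div, div_le_iff₀ hden]; nlinarith [sq_nonneg D, mul_nonneg hC (sq_nonneg D)]
  have hCa : 2 * C * D ^ 2 * a ≤ 1 := by
    rw [mul_one_div, div_le_one hden]; linarith
  set S : ℕ → ℝ := fun n => ∑ k ∈ Ico 1 n, a ^ k * Q k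
  have hS : ∀ n, 1 ≤ n → S n ≤ (Q 1 + 1) * a := by
    refine Nat.le_induction (by simp only [S, Ico_self, sum_empty]; have := hQ 1; positivity)
      fun n hn ih => ?_
    have hx0 : 0 ≤ r * S n := mul_nonneg hr (sum_nonneg fun k _ => by have := hQ k; positivity)
    have hx : r * S n ≤ D * a := by
      calc r * S n ≤ r * ((Q 1 + 1) * a) := by gcongr
        _ = D * a := by ring
    have hgeom : ∑ k ∈ Ico 2 (n + 1), (r * S n) ^ k ≤ 2 * (D * a) ^ 2 := by
      calc ∑ k ∈ Ico 2 (n + 1), (r * S n) ^ k ≤ (r * S n) ^ 2 / (1 - r * S n) :=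
            geom_sum_Ico_le_of_lt_one hx0 (by linarith)
        _ ≤ (D * a) ^ 2 / (1 / 2) := by gcongr; linarith
        _ = 2 * (D * a) ^ 2 := by ring
    calc S (n + 1) ≤ a * Q 1 + C * ∑ k ∈ Ico 2 (n + 1), (r * S n) ^ k :=
          sum_pow_mul_le_of_le_sum_compositions hQ hC hr ha.le hrec hn
      _ ≤ a * Q 1 + C * (2 * (D * a) ^ 2) := by gcongr
      _ = a * Q 1 + (2 * C * D ^ 2 * a) * a := by ring
      _ ≤ (Q 1 + 1) * a := by nlinarith
  refine ⟨a, ha, fun n hn => (hS (n + 1) (by omega)).trans' ?_⟩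
  exact single_le_sum (f := fun k => a ^ k * Q k) (fun k _ => by have := hQ k; positivity)
    (by simp [hn])

namespace FormalMultilinearSeries

theorem applyComposition_ite_lt {𝕜 E F : Type*} [NontriviallyNormedField 𝕜]
    [NormedAddCommGroup E] [NormedSpace 𝕜 E] [NormedAddCommGroup F] [NormedSpace 𝕜 F]
    (q : FormalMultilinearSeries 𝕜 E F) {n : ℕ} {c : Composition n}
    (hc : 1 < c.length) :
    applyComposition (fun k => if k < n then q k else 0 : FormalMultilinearSeries 𝕜 E F) c =
      q.applyComposition c := by
  have hn : 0 < n := c.length_pos_iff.1 (by omega)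
  have hblocks : ∀ j, c.blocksFun j < n := by
    rw [← Composition.ne_single_iff hn, Ne, Composition.eq_single_iff_length]
    omega
  ext v j
  simp [applyComposition, hblocks]

variable {𝕜 : Type*} [RCLike 𝕜] {E : Type*} [NormedAddCommGroup E] [NormedSpace 𝕜 E]

/-- The truncation `q` hides the unknown coefficient, so that `p.comp q (n + 2)` is the sum over
compositions with at least two blocks. -/
noncomputable def radialConjugator (p : FormalMultilinearSeries 𝕜 E E) :
    FormalMultilinearSeries 𝕜 E E
  | 0 => 0
  | 1 => (continuousMultilinearCurryFin1 𝕜 E E).symm (ContinuousLinearMap.id 𝕜 E)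
  | n + 2 =>
    let q : FormalMultilinearSeries 𝕜 E E := fun k =>
      if k < n + 2 then radialConjugator p k else 0
    ((n : 𝕜) + 1)⁻¹ • p.comp q (n + 2)

variable (p : FormalMultilinearSeries 𝕜 E E)

@[simp]
theorem radialConjugator_zero : p.radialConjugator 0 = 0 := by
  rw [radialConjugator]

@[simp]
theorem radialConjugator_one : p.radialConjugator 1 =
    (continuousMultilinearCurryFin1 𝕜 E E).symm (ContinuousLinearMap.id 𝕜 E) := by
  rw [radialConjugator]

theorem radialConjugator_add_two (n : ℕ) :
    p.radialConjugator (n + 2) = ((n : 𝕜) + 1)⁻¹ •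
      ∑ c ∈ {c : Composition (n + 2) | 1 < c.length}.toFinset,
        p.compAlongComposition p.radialConjugator c := by
  rw [radialConjugator]
  congr 1
  ext v
  erw [comp_rightInv_aux1 (by omega : 0 < n + 2)]
  have hp1 : (p 1 fun _ => (0 : E)) = 0 := (p 1).map_zero
  simp only [lt_irrefl, if_false, _root_.zero_apply, hp1, add_zero, _root_.sum_apply,
    compAlongComposition_apply]
  refine Finset.sum_congr rfl fun c hc => ?_
  rw [applyComposition_ite_lt _ (by simpa using hc)]

theorem comp_radialConjugator (hp0 : p 0 = 0)
    (hp1 : p 1 = (continuousMultilinearCurryFin1 𝕜 E E).symm (ContinuousLinearMap.id 𝕜 E))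
    (n : ℕ) : p.comp p.radialConjugator n = (n : 𝕜) • p.radialConjugator n := by
  ext v
  match n with
  | 0 => simp [hp0]
  | 1 => simp [comp_coeff_one, hp1]
  | n + 2 =>
    have hsum : ∑ c ∈ {c : Composition (n + 2) | 1 < c.length}.toFinset,
        p c.length (p.radialConjugator.applyComposition c v) =
          ((n : 𝕜) + 1) • p.radialConjugator (n + 2) v := by
      rw [radialConjugator_add_two, _root_.smul_apply,
        smul_inv_smul₀ (by exact_mod_cast n.succ_ne_zero)]
      simp [_root_.sum_apply, compAlongComposition_apply]
    rw [comp_rightInv_aux1 (by omega : 0 < n + 2), hsum, _root_.smul_apply]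
    simp only [hp1, continuousMultilinearCurryFin1_symm_apply, ContinuousLinearMap.id_apply]
    push_cast
    module

theorem norm_radialConjugator_add_two_le (n : ℕ) :
    ‖p.radialConjugator (n + 2)‖ ≤
      ∑ c ∈ {c : Composition (n + 2) | 1 < c.length}.toFinset,
        ‖p c.length‖ * ∏ j, ‖p.radialConjugator (c.blocksFun j)‖ := by
  have hinv : ‖((n : 𝕜) + 1)⁻¹‖ ≤ 1 := by
    rw [norm_inv, ← Nat.cast_add_one, RCLike.norm_natCast]
    exact inv_le_one_of_one_le₀ (by simp)
  rw [radialConjugator_add_two]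
  refine (norm_smul_le (β := E [×n + 2]→L[𝕜] E) _ _).trans ?_
  refine (mul_le_of_le_one_left (norm_nonneg _) hinv).trans ((norm_sum_le _ _).trans ?_)
  gcongr with c
  exact compAlongComposition_norm _ _ _

theorem radialConjugator_radius_pos (hp : 0 < p.radius) : 0 < p.radialConjugator.radius := by
  obtain ⟨C, r, hC, hr, hpCr⟩ := p.le_mul_pow_of_radius_pos hp
  obtain ⟨a, ha, hbound⟩ := exists_pos_pow_mul_le_of_le_sum_compositions
    (Q := fun k => ‖p.radialConjugator k‖) (fun _ => norm_nonneg _) hC.le hr.le fun n hn => by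
      obtain ⟨m, rfl⟩ := Nat.exists_eq_add_of_le' hn
      refine (p.norm_radialConjugator_add_two_le m).trans ?_
      rw [mul_sum]
      refine sum_le_sum fun c _ => ?_
      rw [← mul_assoc]
      exact mul_le_mul_of_nonneg_right (hpCr _) (prod_nonneg fun _ _ => norm_nonneg _)
  refine lt_of_lt_of_le (ENNReal.coe_pos.2 ha) (p.radialConjugator.le_radius_of_eventually_le
    (r := ⟨a, ha.le⟩) ((‖p.radialConjugator 1‖ + 1) * a) ?_)
  filter_upwards [eventually_ge_atTop 1] with n hn
  rw [mul_comm]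
  exact hbound n hn

end FormalMultilinearSeries

section Linearization

variable {𝕜 : Type*} [NontriviallyNormedField 𝕜] {E F : Type*} [NormedAddCommGroup E]
  [NormedSpace 𝕜 E] [NormedAddCommGroup F] [NormedSpace 𝕜 F]

theorem fderiv_apply_fderiv_of_eventually_left_inverse {f : E → F} {g : F → E} {x : E}
    (hg : DifferentiableAt 𝕜 g (f x)) (hf : DifferentiableAt 𝕜 f x)
    (hgf : ∀ᶠ y in 𝓝 x, g (f y) = y) (u : E) :
    fderiv 𝕜 g (f x) (fderiv 𝕜 f x u) = u := by
  have h := (hg.hasFDerivAt.comp x hf.hasFDerivAt).unique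
    ((hasFDerivAt_id x).congr_of_eventuallyEq hgf)
  exact congr($h u)

theorem HasFPowerSeriesAt.coeff_zero_one_of_isLittleO_sub_id {f : E → E}
    {p : FormalMultilinearSeries 𝕜 E E} (hf : HasFPowerSeriesAt f p 0)
    (h : (fun v => f v - v) =o[𝓝 0] fun v => ‖v‖) :
    p 0 = 0 ∧ p 1 = (continuousMultilinearCurryFin1 𝕜 E E).symm (ContinuousLinearMap.id 𝕜 E) := by
  have hf0 : f 0 = 0 := by
    simpa using h.isBigO.eq_zero_imp.self_of_nhds norm_zero
  have hD : HasFDerivAt f (ContinuousLinearMap.id 𝕜 E) 0 := by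
    rw [hasFDerivAt_iff_isLittleO_nhds_zero]
    simpa [hf0] using h.of_norm_right
  refine ⟨?_, ?_⟩
  · ext v
    rw [hf.coeff_zero, hf0]
    rfl
  · rw [← hf.hasFDerivAt.unique hD]
    simp

variable [CompleteSpace F]

theorem HasFPowerSeriesAt.eventually_hasSum_fderiv_apply {f : E → F}
    {q : FormalMultilinearSeries 𝕜 E F} {x : E} (hf : HasFPowerSeriesAt f q x) :
    ∀ᶠ y in 𝓝 0, HasSum (fun n => n • q n fun _ => y) (fderiv 𝕜 f (x + y) y) := by
  obtain ⟨R, hR⟩ := hf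
  filter_upwards [hR.fderiv.eventually_hasSum] with y hy
  have hshift : HasSum (fun n => (n + 1) • q (n + 1) fun _ => y) (fderiv 𝕜 f (x + y) y) := by
    simpa [q.derivSeries_apply_diag] using hy.mapL (ContinuousLinearMap.apply 𝕜 F y)
  simpa using (hasSum_nat_add_iff' 1).1 (by simpa using hshift)

variable [CompleteSpace E]

theorem HasFPowerSeriesAt.exists_fderiv_apply_eq_of_fderiv_apply_self_eq {Ψ ξ : E → E}
    {q : FormalMultilinearSeries 𝕜 E E} (hΨ : HasFPowerSeriesAt Ψ q 0) (hq0 : q 0 = 0)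
    (hq1 : q 1 = (continuousMultilinearCurryFin1 𝕜 E E).symm (ContinuousLinearMap.id 𝕜 E))
    (hconj : ∀ᶠ w in 𝓝 0, fderiv 𝕜 Ψ w w = ξ (Ψ w)) :
    ∃ Φ : E → E, (∀ᶠ v in 𝓝 0, AnalyticAt 𝕜 Φ v) ∧ Φ 0 = 0 ∧
      fderiv 𝕜 Φ 0 = ContinuousLinearMap.id 𝕜 E ∧ ∀ᶠ v in 𝓝 0, fderiv 𝕜 Φ v (ξ v) = Φ v := by
  have hΨ0 : Ψ 0 = 0 := by
    rw [← hΨ.coeff_zero fun _ => 0, hq0]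
    rfl
  have hD : HasStrictFDerivAt Ψ ((ContinuousLinearEquiv.refl 𝕜 E : E →L[𝕜] E)) 0 := by
    simpa [hq1] using hΨ.hasStrictFDerivAt
  set Φ := hD.localInverse Ψ _ 0
  have hΦa : AnalyticAt 𝕜 Φ 0 := by
    have := (hD.toOpenPartialHomeomorph Ψ).hasFPowerSeriesAt_symm
      hD.mem_toOpenPartialHomeomorph_source hΨ (i := .refl 𝕜 E) (by simpa using hq1)
    simp only [HasStrictFDerivAt.toOpenPartialHomeomorph_coe, hΨ0] at this
    exact this.analyticAt
  have hΦ0 : Φ 0 = 0 := by simpa [hΨ0] using hD.localInverse_apply_image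
  have hΦΨ : ∀ᶠ w in 𝓝 0, Φ (Ψ w) = w := hD.eventually_left_inverse
  have hΨΦ : ∀ᶠ v in 𝓝 0, Ψ (Φ v) = v := by simpa [hΨ0] using hD.eventually_right_inverse
  have hΦ : Tendsto Φ (𝓝 0) (𝓝 0) := by simpa [hΨ0] using hD.localInverse_tendsto
  have hΨd : ∀ᶠ w in 𝓝 0, DifferentiableAt 𝕜 Ψ w :=
    hΨ.analyticAt.eventually_analyticAt.mono fun _ h => h.differentiableAt
  refine ⟨Φ, hΦa.eventually_analyticAt, hΦ0, ?_, ?_⟩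
  · simpa [hΨ0] using hD.to_localInverse.hasFDerivAt.fderiv
  filter_upwards [hΨΦ, hΦa.eventually_analyticAt,
    hΦ.eventually (hconj.and (hΨd.and hΦΨ.eventually_nhds))] with v hv hΦv ⟨hξ, hΨv, hinv⟩
  have := fderiv_apply_fderiv_of_eventually_left_inverse
    (by rw [hv]; exact hΦv.differentiableAt) hΨv hinv (Φ v)
  rwa [hξ, hv] at this

end Linearization

section RadialConjugacy

variable {𝕜 : Type*} [RCLike 𝕜] {E : Type*} [NormedAddCommGroup E] [NormedSpace 𝕜 E]
  [CompleteSpace E]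

theorem HasFPowerSeriesAt.exists_fderiv_apply_self_eq_comp {ξ : E → E}
    {p : FormalMultilinearSeries 𝕜 E E} (hξ : HasFPowerSeriesAt ξ p 0) (hp0 : p 0 = 0)
    (hp1 : p 1 = (continuousMultilinearCurryFin1 𝕜 E E).symm (ContinuousLinearMap.id 𝕜 E)) :
    ∃ Ψ : E → E, HasFPowerSeriesAt Ψ p.radialConjugator 0 ∧
      ∀ᶠ w in 𝓝 0, fderiv 𝕜 Ψ w w = ξ (Ψ w) := by
  have hΨ : HasFPowerSeriesAt p.radialConjugator.sum p.radialConjugator 0 :=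
    (p.radialConjugator.hasFPowerSeriesOnBall
      (p.radialConjugator_radius_pos hξ.radius_pos)).hasFPowerSeriesAt
  have hΨ0 : p.radialConjugator.sum 0 = 0 := by
    rw [← hΨ.coeff_zero fun _ => 0, p.radialConjugator_zero]
    rfl
  have hcomp : HasFPowerSeriesAt (ξ ∘ p.radialConjugator.sum) (p.comp p.radialConjugator) 0 :=
    (hΨ0 ▸ hξ).comp hΨ
  refine ⟨p.radialConjugator.sum, hΨ, ?_⟩
  filter_upwards [hcomp.eventually_hasSum, hΨ.eventually_hasSum_fderiv_apply] with w hξΨ hEuler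
  rw [zero_add] at hξΨ hEuler
  refine hEuler.unique ?_
  simpa [p.comp_radialConjugator hp0 hp1, Nat.cast_smul_eq_nsmul] using hξΨ

end RadialConjugacy

/-- **Poincaré linearization.** An analytic vector field `ξ` near `0` in a
finite-dimensional complex vector space with `ξ v = v + o(‖v‖)` is linearizable:
there is an analytic germ `Φ` with `Φ 0 = 0`, `D₀Φ = id`, and `D_vΦ (ξ v) = Φ v`. -/
theorem poincare_linearization {E : Type*} [NormedAddCommGroup E] [NormedSpace ℂ E]
    [FiniteDimensional ℂ E] (ξ : E → E) (r : ℝ) (hr : 0 < r)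
    (hξa : AnalyticOnNhd ℂ ξ (ball (0 : E) r))
    (hrad : (fun v => ξ v - v) =o[nhds (0 : E)] fun v => ‖v‖) :
    ∃ r' > 0, r' ≤ r ∧ ∃ Φ : E → E,
      AnalyticOnNhd ℂ Φ (ball (0 : E) r') ∧ Φ 0 = 0 ∧
      fderiv ℂ Φ 0 = ContinuousLinearMap.id ℂ E ∧
      ∀ v ∈ ball (0 : E) r', fderiv ℂ Φ v (ξ v) = Φ v := by
  obtain ⟨p, hp⟩ := hξa 0 (mem_ball_self hr)
  obtain ⟨hp0, hp1⟩ := hp.coeff_zero_one_of_isLittleO_sub_id hrad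
  obtain ⟨Ψ, hΨ, hΨξ⟩ := hp.exists_fderiv_apply_self_eq_comp hp0 hp1
  obtain ⟨Φ, hΦa, hΦ0, hDΦ0, hΦξ⟩ := hΨ.exists_fderiv_apply_eq_of_fderiv_apply_self_eq
    p.radialConjugator_zero p.radialConjugator_one hΨξ
  obtain ⟨ε, hε, hball⟩ := Metric.eventually_nhds_iff_ball.1 (hΦa.and hΦξ)
  have hsub : ball (0 : E) (min ε r) ⊆ ball 0 ε := ball_subset_ball (min_le_left _ _)
  exact ⟨min ε r, lt_min hε hr, min_le_right _ _, Φ, fun v hv => (hball v (hsub hv)).1, hΦ0,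
    hDΦ0, fun v hv => (hball v (hsub hv)).2⟩
end

section
/- With the notation above (I finite of cardinality m ≥ 2, E the functions I → ℂ with average 0, H(x) = P_x ∘ x), one has H^{-1}(0) = {0}: if P_x(x_i) = 0 for all i ∈ I, then x = 0. -/
open Finset

/-- `Qpoly m x = ∏ i (X - x i)`, the monic polynomial with roots `x i`. -/
noncomputable def Qpoly (m : ℕ) (x : Fin m → ℂ) : Polynomial ℂ :=
  ∏ i, (Polynomial.X - Polynomial.C (x i))

/-- The antiderivative of `w ↦ ∏ i (w - x i)` vanishing at `0`. -/
noncomputable def Aanti (m : ℕ) (x : Fin m → ℂ) (t : ℂ) : ℂ :=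
  ∑ n ∈ Finset.range (m + 1), (Qpoly m x).coeff n * t ^ (n + 1) / ((n : ℂ) + 1)

/-- `Ppoly m x t = ((m+1)/m) ∑_j ∫_{x_j}^t ∏_i (w - x_i) dw`, the monic centered
polynomial of degree `m+1` with critical points `x i` and centered critical values. -/
noncomputable def Ppoly (m : ℕ) (x : Fin m → ℂ) (t : ℂ) : ℂ :=
  (((m : ℂ) + 1) / m) * ∑ j, (Aanti m x t - Aanti m x (x j))

/-- `Hmap m x = P_x ∘ x`. -/
noncomputable def Hmap (m : ℕ) (x : Fin m → ℂ) : Fin m → ℂ :=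
  fun i => Ppoly m x (x i)

/-!
`P_x` is a polynomial of degree `m + 1` with `P_x' = (m + 1) ∏ i (X - x i)`. If every critical
point `x i` is a root of `P_x`, each distinct critical point is a root of `P_x` of multiplicity one
more than its multiplicity as a root of `P_x'`. Counting roots, `m + #{distinct x i} ≤ m + 1`, so
all `x i` coincide, and the vanishing average forces them to be `0`.
-/

open Polynomial

namespace Polynomial

variable {K : Type*} [Field K] [CharZero K] [DecidableEq K]

theorem roots_derivative_add_toFinset_le_roots {P : K[X]}
    (h : ∀ a ∈ (derivative P).roots, P.IsRoot a) :
    (derivative P).roots + (derivative P).roots.toFinset.val ≤ P.roots := by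
  refine Multiset.le_iff_count.2 fun a => ?_
  rw [Multiset.count_add, Multiset.toFinset_val, Multiset.count_dedup, count_roots, count_roots]
  split_ifs with ha
  · have hP : P ≠ 0 := fun hP => by simp [hP] at ha
    have hpos := (rootMultiplicity_pos hP).2 (h a ha)
    rw [derivative_rootMultiplicity_of_root (h a ha)]
    omega
  · rw [← count_roots, Multiset.count_eq_zero.2 ha]
    omega

theorem card_toFinset_roots_derivative_le_one [IsAlgClosed K] {P : K[X]}
    (h : ∀ a ∈ (derivative P).roots, P.IsRoot a) :
    (derivative P).roots.toFinset.card ≤ 1 := by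
  have hcard := Multiset.card_le_card (roots_derivative_add_toFinset_le_roots h)
  have hdeg : P.natDegree ≤ (derivative P).natDegree + 1 := by
    rw [natDegree_derivative]; omega
  rw [Multiset.card_add, IsAlgClosed.card_roots_eq_natDegree] at hcard
  have hroots := (card_roots' P).trans hdeg
  simp only [Finset.card_val] at hcard
  omega

end Polynomial

theorem roots_Qpoly (m : ℕ) (x : Fin m → ℂ) : (Qpoly m x).roots = Finset.univ.val.map x := by
  rw [Qpoly, Finset.prod_eq_multiset_prod, ← roots_multiset_prod_X_sub_C (univ.val.map x),
    Multiset.map_map]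
  rfl

noncomputable def Aanti.poly (m : ℕ) (x : Fin m → ℂ) : ℂ[X] :=
  ∑ n ∈ Finset.range (m + 1), C ((Qpoly m x).coeff n / ((n : ℂ) + 1)) * X ^ (n + 1)

theorem Aanti.eval_poly (m : ℕ) (x : Fin m → ℂ) (t : ℂ) :
    (Aanti.poly m x).eval t = Aanti m x t := by
  simp [Aanti.poly, Aanti, eval_finsetSum, div_mul_eq_mul_div]

theorem Aanti.derivative_poly (m : ℕ) (x : Fin m → ℂ) :
    derivative (Aanti.poly m x) = Qpoly m x := by
  have hQ : (Qpoly m x).natDegree < m + 1 := by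
    rw [Qpoly, natDegree_prod_of_monic _ _ fun i _ => monic_X_sub_C (x i)]
    simp
  rw [(Qpoly m x).as_sum_range_C_mul_X_pow' hQ, Aanti.poly, derivative_sum]
  refine Finset.sum_congr rfl fun n _ => ?_
  rw [derivative_C_mul_X_pow, Nat.add_sub_cancel, Nat.cast_add_one,
    div_mul_cancel₀ _ (Nat.cast_add_one_ne_zero n)]

noncomputable def Ppoly.poly (m : ℕ) (x : Fin m → ℂ) : ℂ[X] :=
  C (((m : ℂ) + 1) / m) * ∑ j, (Aanti.poly m x - C (Aanti m x (x j)))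

theorem Ppoly.eval_poly (m : ℕ) (x : Fin m → ℂ) (t : ℂ) :
    (Ppoly.poly m x).eval t = Ppoly m x t := by
  simp [Ppoly.poly, Ppoly, eval_finsetSum, Aanti.eval_poly]

theorem Ppoly.derivative_poly {m : ℕ} (hm : m ≠ 0) (x : Fin m → ℂ) :
    derivative (Ppoly.poly m x) = C ((m : ℂ) + 1) * Qpoly m x := by
  simp only [Ppoly.poly, derivative_C_mul, derivative_sum, derivative_sub, derivative_C, sub_zero,
    Aanti.derivative_poly, Finset.sum_const, Finset.card_univ, Fintype.card_fin, nsmul_eq_mul,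
    ← mul_assoc, ← C_eq_natCast, ← C_mul]
  rw [div_mul_cancel₀ _ (Nat.cast_ne_zero.2 hm : (m : ℂ) ≠ 0)]

theorem Ppoly.roots_derivative_poly {m : ℕ} (hm : m ≠ 0) (x : Fin m → ℂ) :
    (derivative (Ppoly.poly m x)).roots = Finset.univ.val.map x := by
  rw [Ppoly.derivative_poly hm, roots_C_mul _ (Nat.cast_add_one_ne_zero m), roots_Qpoly]

theorem Hmap_preimage_zero_general (m : ℕ) (x : Fin m → ℂ)
    (havg : ∑ i, x i = 0) (h0 : ∀ i, Ppoly m x (x i) = 0) :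
    x = 0 := by
  rcases eq_or_ne m 0 with rfl | hm
  · exact Subsingleton.elim _ _
  have hcrit : ∀ a ∈ (derivative (Ppoly.poly m x)).roots, (Ppoly.poly m x).IsRoot a := by
    simp only [Ppoly.roots_derivative_poly hm, Multiset.mem_map, Finset.mem_val,
      Finset.mem_univ, true_and, forall_exists_index, forall_apply_eq_imp_iff]
    exact fun i => (Ppoly.eval_poly m x _).trans (h0 i)
  have hconst : ∀ i j, x i = x j := fun i j => by
    refine Finset.card_le_one.1 (card_toFinset_roots_derivative_le_one hcrit) _ ?_ _ ?_ <;>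
      simp [Ppoly.roots_derivative_poly hm]
  funext i
  have : (m : ℂ) * x i = 0 := by
    simpa [hconst _ i] using havg
  simpa [hm] using this

/-- `H⁻¹(0) = {0}`: if all critical values of `P_x` vanish then `x = 0`. -/
theorem Hmap_preimage_zero (m : ℕ) (hm : 2 ≤ m) (x : Fin m → ℂ)
    (havg : ∑ i, x i = 0) (h0 : ∀ i, Ppoly m x (x i) = 0) :
    x = 0 :=
  Hmap_preimage_zero_general m x havg h0
end

section
/- With H : E → E defined by H(x) = P_x ∘ x on the space E of average-zero functions I → ℂ (|I| = m ≥ 2): x ∈ E is a fixed point of H if and only if P_x is a monic centered polynomial of degree m+1 all of whose critical points are fixed points of P_x. Moreover every monic centered polynomial P of degree m+1 with fixed critical points equals P_x for some fixed point x of H. -/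
open Finset

/-! The derivative of `P_x` is `(m + 1) ∏ i (X - x i)`, so the critical points of `P_x` are
exactly the `x i`, and `x` is a fixed point of `H` iff `P_x` fixes them. Conversely, listing the
roots of `P' / (m + 1)` with multiplicity gives `x`, centered because `P` has no `X ^ m` term.
Then `P` and `P_x` have the same derivative, so they differ by a constant, and that constant is
`0`: summed over the `x i`, both take the value `∑ i, x i = 0` (`P` because it fixes its critical
points, `P_x` because its critical values are centered). -/

open Polynomial

theorem Multiset.exists_fin_univ_map_eq {α : Type*} {m : ℕ} (s : Multiset α)
    (hs : Multiset.card s = m) : ∃ x : Fin m → α, univ.val.map x = s := by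
  have hlen : s.toList.length = m := by rw [Multiset.length_toList, hs]
  refine ⟨fun i => s.toList.get (Fin.cast hlen.symm i), ?_⟩
  rw [Fin.univ_val_map, ← List.ofFn_congr hlen, List.ofFn_get, Multiset.coe_toList]

section Antiderivative

variable {K : Type*} [Field K] [CharZero K]

noncomputable def Polynomial.antiderivative (q : K[X]) : K[X] :=
  ∑ n ∈ range (q.natDegree + 1), C (q.coeff n / (n + 1)) * X ^ (n + 1)

theorem Polynomial.derivative_antiderivative (q : K[X]) : derivative q.antiderivative = q := by
  rw [antiderivative, derivative_sum]
  conv_rhs => rw [q.as_sum_range_C_mul_X_pow]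
  refine sum_congr rfl fun n _ => ?_
  rw [derivative_C_mul_X_pow, Nat.add_sub_cancel, Nat.cast_add_one,
    div_mul_cancel₀ _ (Nat.cast_add_one_ne_zero n)]

theorem Polynomial.eq_of_derivative_eq_of_sum_eval_eq {ι : Type*} [Fintype ι] [Nonempty ι]
    {p q : K[X]} (x : ι → K) (hd : derivative p = derivative q)
    (hs : ∑ i, p.eval (x i) = ∑ i, q.eval (x i)) : p = q := by
  have hconst := eq_C_of_derivative_eq_zero (p := p - q) (by rw [derivative_sub, hd, sub_self])
  have hsum : ∑ i, (p - q).eval (x i) = 0 := by simp only [eval_sub, sum_sub_distrib, hs, sub_self]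
  rw [hconst] at hsum
  simp only [eval_C, sum_const, card_univ, nsmul_eq_mul, mul_eq_zero, Nat.cast_eq_zero,
    Fintype.card_ne_zero, false_or] at hsum
  rwa [hsum, C_0, sub_eq_zero] at hconst

end Antiderivative

variable {m : ℕ}

theorem Qpoly_natDegree (x : Fin m → ℂ) : (Qpoly m x).natDegree = m := by
  simp [Qpoly, natDegree_prod_of_monic _ _ fun i _ => monic_X_sub_C (x i)]

theorem Qpoly_nextCoeff (x : Fin m → ℂ) : (Qpoly m x).nextCoeff = -∑ i, x i :=
  prod_X_sub_C_nextCoeff x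

theorem Qpoly_eval_eq_zero_iff (x : Fin m → ℂ) (c : ℂ) :
    (Qpoly m x).eval c = 0 ↔ ∃ i, c = x i := by
  simp [Qpoly, eval_prod, prod_eq_zero_iff, sub_eq_zero]

theorem exists_Qpoly_eq {Q : ℂ[X]} (hQ : Q.Monic) (hdeg : Q.natDegree = m) :
    ∃ x : Fin m → ℂ, Qpoly m x = Q := by
  have hsplit := IsAlgClosed.splits Q
  obtain ⟨x, hx⟩ := Q.roots.exists_fin_univ_map_eq
    ((splits_iff_card_roots.mp hsplit).trans hdeg)
  refine ⟨x, ?_⟩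
  rw [hsplit.eq_prod_roots_of_monic hQ, ← hx, Multiset.map_map, Qpoly, prod_eq_multiset_prod]
  rfl

theorem Aanti_eq_eval (x : Fin m → ℂ) (t : ℂ) :
    Aanti m x t = (Qpoly m x).antiderivative.eval t := by
  simp only [Aanti, antiderivative, Qpoly_natDegree, eval_finsetSum, eval_mul, eval_C, eval_pow,
    eval_X, div_mul_eq_mul_div]

noncomputable def PxPoly (m : ℕ) (x : Fin m → ℂ) : ℂ[X] :=
  C (((m : ℂ) + 1) / m) *
    ∑ j, ((Qpoly m x).antiderivative - C ((Qpoly m x).antiderivative.eval (x j)))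

theorem Ppoly_eq_eval (x : Fin m → ℂ) : Ppoly m x = fun t => (PxPoly m x).eval t := by
  ext t
  simp only [Ppoly, PxPoly, Aanti_eq_eval, eval_mul, eval_C, eval_finsetSum, eval_sub]

theorem derivative_PxPoly (hm : m ≠ 0) (x : Fin m → ℂ) :
    derivative (PxPoly m x) = C ((m : ℂ) + 1) * Qpoly m x := by
  simp only [PxPoly, derivative_C_mul, derivative_sum, derivative_sub, derivative_C, sub_zero,
    derivative_antiderivative, sum_const, card_univ, Fintype.card_fin, nsmul_eq_mul, ← mul_assoc,
    ← C_eq_natCast, ← C_mul]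
  rw [div_mul_cancel₀ _ (Nat.cast_ne_zero.mpr hm : (m : ℂ) ≠ 0)]

theorem sum_Hmap_eq_zero (x : Fin m → ℂ) : ∑ i, Hmap m x i = 0 := by
  simp only [Hmap, Ppoly, ← mul_sum, sum_sub_distrib, sum_const, card_univ, Fintype.card_fin,
    ← smul_sum, sub_self, mul_zero]

theorem deriv_Ppoly_eq_zero_iff (hm : m ≠ 0) (x : Fin m → ℂ) (c : ℂ) :
    deriv (Ppoly m x) c = 0 ↔ ∃ i, c = x i := by
  rw [Ppoly_eq_eval, Polynomial.deriv, derivative_PxPoly hm, eval_mul, eval_C,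
    mul_eq_zero_iff_left (Nat.cast_add_one_ne_zero m), Qpoly_eval_eq_zero_iff]

theorem exists_derivative_eq_C_mul_Qpoly {P : ℂ[X]} (hm : m ≠ 0) (hmon : P.Monic)
    (hdeg : P.natDegree = m + 1) (hcent : P.coeff m = 0) :
    ∃ x : Fin m → ℂ, ∑ i, x i = 0 ∧ derivative P = C ((m : ℂ) + 1) * Qpoly m x := by
  have hm1 : (m : ℂ) + 1 ≠ 0 := Nat.cast_add_one_ne_zero m
  set Q := C ((m : ℂ) + 1)⁻¹ * derivative P
  have hQdeg : Q.natDegree = m := by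
    rw [natDegree_C_mul (inv_ne_zero hm1), natDegree_derivative, hdeg, Nat.add_sub_cancel]
  have hQmonic : Q.Monic := by
    rw [Monic, leadingCoeff_C_mul_of_isUnit (isUnit_iff_ne_zero.mpr (inv_ne_zero hm1)),
      leadingCoeff_derivative, hmon.leadingCoeff, hdeg, one_mul, Nat.cast_add_one,
      inv_mul_cancel₀ hm1]
  have hQnext : Q.nextCoeff = 0 := by
    rw [nextCoeff_of_natDegree_pos (by omega), hQdeg, coeff_C_mul, coeff_derivative,
      Nat.sub_add_cancel (by omega), hcent, zero_mul, mul_zero]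
  obtain ⟨x, hx⟩ := exists_Qpoly_eq hQmonic hQdeg
  refine ⟨x, ?_, ?_⟩
  · rw [← neg_eq_zero, ← Qpoly_nextCoeff, hx, hQnext]
  · rw [hx, ← mul_assoc, ← C_mul, mul_inv_cancel₀ hm1, C_1, one_mul]

/-- Fixed points of `H` correspond to monic centered polynomials of degree `m+1`
with fixed critical points. -/
theorem Hmap_fixed_points (m : ℕ) (hm : 2 ≤ m) :
    (∀ x : Fin m → ℂ, (∑ i, x i = 0) → Hmap m x = x →
      ∀ c : ℂ, deriv (Ppoly m x) c = 0 → Ppoly m x c = c) ∧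
    (∀ P : Polynomial ℂ, P.Monic → P.natDegree = m + 1 → P.coeff m = 0 →
      (∀ c : ℂ, P.derivative.eval c = 0 → P.eval c = c) →
      ∃ x : Fin m → ℂ, (∑ i, x i = 0) ∧ Hmap m x = x ∧
        ∀ t : ℂ, Ppoly m x t = P.eval t) := by
  have hm0 : m ≠ 0 := by omega
  have : NeZero m := ⟨hm0⟩
  refine ⟨fun x _ hfix c hc => ?_, fun P hmon hdeg hcent hfixP => ?_⟩
  · obtain ⟨i, rfl⟩ := (deriv_Ppoly_eq_zero_iff hm0 x c).mp hc
    exact congrFun hfix i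
  obtain ⟨x, hsum, hder⟩ := exists_derivative_eq_C_mul_Qpoly hm0 hmon hdeg hcent
  have hPx : ∀ i, P.eval (x i) = x i := fun i => hfixP _ <| by
    rw [hder, eval_mul, (Qpoly_eval_eq_zero_iff x (x i)).mpr ⟨i, rfl⟩, mul_zero]
  have hP : PxPoly m x = P := by
    refine eq_of_derivative_eq_of_sum_eval_eq x (by rw [derivative_PxPoly hm0, hder]) ?_
    calc ∑ i, (PxPoly m x).eval (x i) = ∑ i, Hmap m x i := by simp only [Hmap, Ppoly_eq_eval]
      _ = ∑ i, P.eval (x i) := by rw [sum_Hmap_eq_zero, sum_congr rfl fun i _ => hPx i, hsum]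
  have hPpoly : Ppoly m x = fun t => P.eval t := by rw [Ppoly_eq_eval, hP]
  exact ⟨x, hsum, funext fun i => (congrFun hPpoly (x i)).trans (hPx i), congrFun hPpoly⟩
end

section
/- Let m ≥ 2 and P(z) = ((m+1)/m)z + z^{m+1}. Then all m critical points of P are simple and are fixed points of P, and P is the unique monic centered polynomial of degree m+1 with m distinct (simple) critical points all of which are fixed. In particular, if c is a critical point of P then P''(c) = −(m+1)/c. -/
/-!
For `P = ((m+1)/m) z + z^(m+1)`, `P'(c) = 0` means `m c^m = -1`; substituting this gives `P(c) = c`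
and `c P''(c) = (m+1) m c^m = -(m+1)`.

Conversely, let `Q` be monic of degree `m+1` with vanishing `z^m` coefficient and with simple, fixed
critical points. Then `Q'` has `m` distinct roots, all of them roots of `D = (m+1)(Q - z) - z Q'`.
In `D` the `z^(m+1)` terms cancel and, as `m ≥ 2`, the `z^m` coefficient is `Q.coeff m = 0`; so
`deg D < m` and `D = 0`. The coefficients of `(m+1)(Q - z) = z Q'` read
`(m+1-n) Q.coeff n = (m+1) [n = 1]`, which together with monicity force `Q = P`.
-/

open Polynomial

theorem Polynomial.card_roots_toFinset_eq_natDegree_of_simple {K : Type*} [Field K]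
    [IsAlgClosed K] [DecidableEq K] {p : K[X]}
    (hsimple : ∀ c, p.eval c = 0 → p.derivative.eval c ≠ 0) :
    p.roots.toFinset.card = p.natDegree := by
  have hsep : p.Separable := (isCoprime_iff_aeval_ne_zero_of_isAlgClosed K K p _).2 fun c => by
    simpa only [coe_aeval_eq_eval, ← imp_iff_not_or] using hsimple c
  rw [Multiset.toFinset_card_of_nodup (nodup_roots hsep), IsAlgClosed.card_roots_eq_natDegree]

section FixedPointEquation

variable {R : Type*} [CommRing R]

theorem Polynomial.coeff_C_mul_sub_X_sub_X_mul_derivative (a : R) (Q : R[X]) (n : ℕ) :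
    (C a * (Q - X) - X * derivative Q).coeff n = (a - n) * Q.coeff n - a * (X : R[X]).coeff n := by
  rcases n with _ | n
  · simp
  · rw [coeff_sub, coeff_C_mul, coeff_sub, coeff_X_mul, coeff_derivative]
    push_cast
    ring

theorem Polynomial.natDegree_C_mul_sub_X_sub_X_mul_derivative_lt {m : ℕ} (hm : 2 ≤ m)
    {Q : R[X]} (hQd : Q.natDegree ≤ m + 1) (hlead : Q.coeff (m + 1) = 1) (hQc : Q.coeff m = 0) :
    (C ((m : R) + 1) * (Q - X) - X * derivative Q).natDegree < m := by
  have : (C ((m : R) + 1) * (Q - X) - X * derivative Q).natDegree ≤ m - 1 :=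
    natDegree_le_iff_coeff_eq_zero.2 fun n hn => by
      rw [coeff_C_mul_sub_X_sub_X_mul_derivative, coeff_X_of_ne_one (by omega)]
      rcases (show n = m ∨ n = m + 1 ∨ m + 1 < n by omega) with rfl | rfl | h
      · simp [hQc]
      · simp [hlead]
      · simp [coeff_eq_zero_of_natDegree_lt (hQd.trans_lt h)]
  omega

end FixedPointEquation

noncomputable def criticallyFixedPoly (K : Type*) [Field K] (m : ℕ) : K[X] :=
  C (((m : K) + 1) / m) * X + X ^ (m + 1)

namespace criticallyFixedPoly

variable {K : Type*} [Field K] {m : ℕ}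

theorem eval_eq (m : ℕ) (z : K) :
    (criticallyFixedPoly K m).eval z = ((m + 1) / m) * z + z ^ (m + 1) := by
  simp [criticallyFixedPoly]

theorem coeff_eq (m n : ℕ) :
    (criticallyFixedPoly K m).coeff n =
      (if n = 1 then ((m : K) + 1) / m else 0) + if n = m + 1 then 1 else 0 := by
  simp [criticallyFixedPoly, coeff_X, coeff_X_pow, eq_comm]

theorem derivative_eq (m : ℕ) :
    derivative (criticallyFixedPoly K m) = C (((m : K) + 1) / m) + C ((m : K) + 1) * X ^ m := by
  simp [criticallyFixedPoly]

theorem eval_derivative_derivative_mul_self (m : ℕ) (c : K) :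
    (derivative (derivative (criticallyFixedPoly K m))).eval c * c =
      ((m : K) + 1) * (m * c ^ m) := by
  rcases m with _ | k
  · simp [criticallyFixedPoly]
  · simp only [derivative_eq, derivative_add, derivative_C, derivative_C_mul_X_pow, zero_add,
      eval_mul, eval_C, eval_pow, eval_X]
    push_cast
    ring

variable [CharZero K]

theorem natDegree_derivative (m : ℕ) :
    (derivative (criticallyFixedPoly K m)).natDegree = m := by
  rw [derivative_eq, natDegree_C_add, natDegree_C_mul_X_pow _ _ (Nat.cast_add_one_ne_zero m)]

section CriticalPoint

variable (hm : m ≠ 0) {c : K} (hc : (derivative (criticallyFixedPoly K m)).eval c = 0)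
include hm hc

theorem mul_pow_eq_neg_one_of_critical : (m : K) * c ^ m = -1 := by
  have hm' : (m : K) ≠ 0 := Nat.cast_ne_zero.2 hm
  rw [derivative_eq] at hc
  simp only [eval_add, eval_C, eval_mul, eval_pow, eval_X] at hc
  have : ((m : K) + 1) * ((m : K) * c ^ m + 1) = 0 := by
    field_simp at hc
    linear_combination hc
  linear_combination (mul_eq_zero.1 this).resolve_left (Nat.cast_add_one_ne_zero m)

theorem ne_zero_of_critical : c ≠ 0 := by
  rintro rfl
  simpa [hm] using mul_pow_eq_neg_one_of_critical hm hc

theorem eval_of_critical : (criticallyFixedPoly K m).eval c = c := by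
  have hm' : (m : K) ≠ 0 := Nat.cast_ne_zero.2 hm
  rw [eval_eq]
  field_simp
  linear_combination c * mul_pow_eq_neg_one_of_critical hm hc

theorem eval_derivative_derivative_of_critical :
    (derivative (derivative (criticallyFixedPoly K m))).eval c = -((m : K) + 1) / c := by
  refine eq_div_of_mul_eq (ne_zero_of_critical hm hc) ?_
  rw [eval_derivative_derivative_mul_self, mul_pow_eq_neg_one_of_critical hm hc]
  ring

end CriticalPoint

theorem eq_of_C_mul_sub_X_eq_X_mul_derivative (hm : m ≠ 0) {Q : K[X]}
    (hQ : C ((m : K) + 1) * (Q - X) = X * derivative Q) (hlead : Q.coeff (m + 1) = 1) :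
    Q = criticallyFixedPoly K m := by
  ext n
  have h := coeff_C_mul_sub_X_sub_X_mul_derivative ((m : K) + 1) Q n
  rw [hQ, sub_self, coeff_zero] at h
  rw [coeff_eq]
  rcases eq_or_ne n (m + 1) with rfl | hn
  · simp [hlead, hm]
  rcases eq_or_ne n 1 with rfl | hn1
  · have hm' : (m : K) ≠ 0 := Nat.cast_ne_zero.2 hm
    rw [coeff_X_one, Nat.cast_one] at h
    rw [if_pos rfl, if_neg hn, add_zero, eq_div_iff hm']
    linear_combination -h
  · have hcoef : (m : K) + 1 - n ≠ 0 := by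
      rw [sub_ne_zero]
      exact_mod_cast hn.symm
    simpa [hn, hn1, coeff_X_of_ne_one hn1, hcoef] using h

theorem eq_of_criticalPoints_simple_fixed [IsAlgClosed K] (hm : 2 ≤ m) {Q : K[X]}
    (hQm : Q.Monic) (hQd : Q.natDegree = m + 1) (hQc : Q.coeff m = 0)
    (hcrit : ∀ c, Q.derivative.eval c = 0 →
      Q.derivative.derivative.eval c ≠ 0 ∧ Q.eval c = c) :
    Q = criticallyFixedPoly K m := by
  classical
  have hlead : Q.coeff (m + 1) = 1 := hQd ▸ hQm.coeff_natDegree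
  refine eq_of_C_mul_sub_X_eq_X_mul_derivative (by omega) (sub_eq_zero.1 ?_) hlead
  refine eq_zero_of_natDegree_lt_card_of_eval_eq_zero' _ Q.derivative.roots.toFinset
    (fun c hc => ?_) ?_
  · have hc' : Q.derivative.eval c = 0 := (mem_roots'.1 (Multiset.mem_toFinset.1 hc)).2
    simp [(hcrit c hc').2, hc']
  · rw [card_roots_toFinset_eq_natDegree_of_simple fun c hc => (hcrit c hc).1,
      Polynomial.natDegree_derivative, hQd]
    exact natDegree_C_mul_sub_X_sub_X_mul_derivative_lt hm hQd.le hlead hQc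

end criticallyFixedPoly

/-- The polynomial `P z = ((m+1)/m) z + z^(m+1)` has `m` simple critical points,
all fixed, with `P''(c) = -(m+1)/c` at each critical point `c`, and it is the
unique monic centered polynomial of degree `m+1` all of whose critical points
are simple and fixed. -/
theorem unique_monic_centered_fixed_simple_critical (m : ℕ) (hm : 2 ≤ m)
    (P : ℂ → ℂ) (hP : ∀ z, P z = (((m : ℂ) + 1) / m) * z + z ^ (m + 1)) :
    (∀ c : ℂ, deriv P c = 0 →
      c ≠ 0 ∧ deriv (deriv P) c ≠ 0 ∧ P c = c ∧
      deriv (deriv P) c = -((m : ℂ) + 1) / c) ∧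
    ({c : ℂ | deriv P c = 0}.ncard = m) ∧
    (∀ Q : Polynomial ℂ, Q.Monic → Q.natDegree = m + 1 → Q.coeff m = 0 →
      (∀ c : ℂ, Q.derivative.eval c = 0 →
        Q.derivative.derivative.eval c ≠ 0 ∧ Q.eval c = c) →
      ∀ z : ℂ, Q.eval z = P z) := by
  classical
  have hm0 : m ≠ 0 := by omega
  set p := criticallyFixedPoly ℂ m
  obtain rfl : P = fun z => p.eval z := funext fun z => by rw [hP, criticallyFixedPoly.eval_eq]
  have hderiv (q : ℂ[X]) : deriv (fun z => q.eval z) = fun z => q.derivative.eval z :=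
    funext fun _ => q.deriv
  have hsimple (c : ℂ) (hc : p.derivative.eval c = 0) : p.derivative.derivative.eval c ≠ 0 := by
    rw [criticallyFixedPoly.eval_derivative_derivative_of_critical hm0 hc]
    exact div_ne_zero (neg_ne_zero.2 (Nat.cast_add_one_ne_zero m))
      (criticallyFixedPoly.ne_zero_of_critical hm0 hc)
  have hcrit : {c | p.derivative.eval c = 0} = p.derivative.roots.toFinset := by
    have hp' : p.derivative ≠ 0 := ne_zero_of_natDegree_gt (n := 0) <| by
      rw [criticallyFixedPoly.natDegree_derivative]
      omega
    ext c
    simp [mem_roots hp']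
  simp only [hderiv, hcrit, Set.ncard_coe_finset]
  refine ⟨fun c hc => ⟨criticallyFixedPoly.ne_zero_of_critical hm0 hc, hsimple c hc,
      criticallyFixedPoly.eval_of_critical hm0 hc,
      criticallyFixedPoly.eval_derivative_derivative_of_critical hm0 hc⟩, ?_,
    fun Q hQm hQd hQc hQcrit z => ?_⟩
  · rw [card_roots_toFinset_eq_natDegree_of_simple hsimple,
      criticallyFixedPoly.natDegree_derivative]
  · rw [criticallyFixedPoly.eq_of_criticalPoints_simple_fixed hm hQm hQd hQc hQcrit]
end

section
/- Let m ≥ 2, P(z) = ((m+1)/m)z + z^{m+1}, and let x ∈ E (average-zero functions I → ℂ, |I| = m) be the corresponding fixed point of H with the x_i the m distinct critical points of P. Then for each k ∈ [1, m−1], the vector v with components v_i = x_i^k is an eigenvector of D_xH with eigenvalue (m+1)/k; i.e., the spectrum of D_xH on T_xE is {(m+1)/k : k = 1,…,m−1}, which is contained in ℂ ∖ closed unit disk, so x is a repelling fixed point. -/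
open Finset

/-!
Write `Q_y = ∏ i, (X - y i)` and `A_y` for its antiderivative, so that
`H(y)_i = ((m+1)/m) ∑ j, (A_y (y i) - A_y (y j))`. At `x` we have `Q_x = X^m + 1/m`, so the nodal
weights `∏_{j ≠ i} (x i - x j)⁻¹ = 1/Q_x'(x i)` equal `-x i`. Moving `x` in the direction
`v i = x i ^ k` changes `Q` by `-∑ i, v i ∏_{j ≠ i} (X - x j)`, which by Lagrange interpolation of
`X^(k-1)` is exactly `X^(k-1)`; comparing `X^(m-1)`-coefficients also gives `∑ i, x i ^ k = 0`.
Hence `A` changes by `t^k/k`, the motion of the evaluation point contributes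
`Q_x(x j) v j = 0`, and `D_x H v = ((m+1)/k) v`.
-/

open Polynomial Lagrange

section CoeffDeriv

variable {𝕜 : Type*} [NontriviallyNormedField 𝕜] {f g : 𝕜 → 𝕜[X]} {f' g' : 𝕜[X]} {s : 𝕜}

/-- `𝕜[X]` carries no norm, so polynomial-valued maps are differentiated coefficientwise. -/
def HasCoeffDerivAt (f : 𝕜 → 𝕜[X]) (f' : 𝕜[X]) (s : 𝕜) : Prop :=
  ∀ n, HasDerivAt (fun t => (f t).coeff n) (f'.coeff n) s

theorem hasCoeffDerivAt_const (p : 𝕜[X]) (s : 𝕜) : HasCoeffDerivAt (fun _ => p) 0 s :=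
  fun n => by simpa using hasDerivAt_const s (p.coeff n)

theorem HasCoeffDerivAt.mul (hf : HasCoeffDerivAt f f' s) (hg : HasCoeffDerivAt g g' s) :
    HasCoeffDerivAt (fun t => f t * g t) (f' * g s + f s * g') s := fun n => by
  simpa only [coeff_mul, coeff_add, ← sum_add_distrib] using
    HasDerivAt.fun_sum fun p _ => (hf p.1).fun_mul (hg p.2)

theorem HasCoeffDerivAt.finset_prod {ι : Type*} [DecidableEq ι] {f : ι → 𝕜 → 𝕜[X]}
    {f' : ι → 𝕜[X]} {u : Finset ι} (hf : ∀ i ∈ u, HasCoeffDerivAt (f i) (f' i) s) :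
    HasCoeffDerivAt (fun t => ∏ i ∈ u, f i t) (∑ i ∈ u, f' i * ∏ j ∈ u.erase i, f j s) s := by
  induction u using Finset.induction_on with
  | empty => simpa using hasCoeffDerivAt_const 1 s
  | insert a u ha ih =>
    have h := (hf a (mem_insert_self a u)).mul (ih fun i hi => hf i (mem_insert_of_mem hi))
    simp only [prod_insert ha, sum_insert ha, erase_insert ha]
    convert h using 2
    rw [mul_sum]
    refine sum_congr rfl fun i hi => ?_
    rw [erase_insert_of_ne (ne_of_mem_of_not_mem hi ha).symm, prod_insert (by simp [ha])]
    ring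

theorem HasDerivAt.hasCoeffDerivAt_X_sub_C {c : 𝕜 → 𝕜} {c' : 𝕜} (hc : HasDerivAt c c' s) :
    HasCoeffDerivAt (fun t => X - C (c t)) (-C c') s := by
  rintro (_ | n)
  · simpa using hc.fun_neg
  · simpa [coeff_X, coeff_C] using hasDerivAt_const s ((X : 𝕜[X]).coeff (n + 1))

theorem HasCoeffDerivAt.hasDerivAt_sum_coeff_mul_pow_div [CharZero 𝕜] {g : 𝕜 → 𝕜} {g' : 𝕜}
    (hf : HasCoeffDerivAt f f' s) (hg : HasDerivAt g g' s) {N : ℕ} (hN : (f s).natDegree < N) :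
    HasDerivAt (fun t => ∑ n ∈ range N, (f t).coeff n * g t ^ (n + 1) / (n + 1))
      (∑ n ∈ range N, f'.coeff n * g s ^ (n + 1) / (n + 1) + (f s).eval (g s) * g') s := by
  have h := HasDerivAt.fun_sum fun n (_ : n ∈ range N) =>
    ((hf n).fun_mul (hg.fun_pow (n + 1))).div_const ((n : 𝕜) + 1)
  refine h.congr_deriv ?_
  rw [eval_eq_sum_range' hN, sum_mul, ← sum_add_distrib]
  refine sum_congr rfl fun n _ => ?_
  have : (n : 𝕜) + 1 ≠ 0 := Nat.cast_add_one_ne_zero n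
  push_cast
  field_simp

theorem differentiable_coeff_prod_X_sub_C {ι : Type*} [Fintype ι] (u : Finset ι) (n : ℕ) :
    Differentiable 𝕜 fun y : ι → 𝕜 => (∏ i ∈ u, (X - C (y i))).coeff n := by
  let P : ((ι → 𝕜) → 𝕜[X]) → Prop := fun F => ∀ n, Differentiable 𝕜 fun y => (F y).coeff n
  have hP : P (∏ i ∈ u, fun y => X - C (y i)) := by
    refine prod_induction _ P (fun F G hF hG n => ?_) (fun n => ?_) (fun i _ n => ?_)
    · simp only [Pi.mul_apply, coeff_mul]
      exact Differentiable.fun_sum fun p _ => (hF p.1).mul (hG p.2)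
    · simp
    · rcases n with _ | n
      · simpa using (differentiable_apply i).neg
      · simp [coeff_X]
  simpa only [prod_apply] using hP n

theorem hasCoeffDerivAt_nodal_add_smul {ι : Type*} [DecidableEq ι] (u : Finset ι) (x v : ι → 𝕜) :
    HasCoeffDerivAt (fun s => nodal u (x + s • v)) (-∑ i ∈ u, C (v i) * nodal (u.erase i) x) 0 := by
  have h := HasCoeffDerivAt.finset_prod (u := u) fun i _ =>
    (((hasDerivAt_id (0 : 𝕜)).mul_const (v i)).const_add (x i)).hasCoeffDerivAt_X_sub_C
  simp only [nodal, Pi.add_apply, Pi.smul_apply, smul_eq_mul]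
  simpa [← sum_neg_distrib, mul_comm] using h

end CoeffDeriv

section RootsOfXPowSubC

variable {F : Type*} [Field F] {m : ℕ} {x : Fin m → F} {c : F}

theorem nodal_eq_X_pow_sub_C (hm : 0 < m) (hinj : Function.Injective x) (hx : ∀ i, x i ^ m = c) :
    nodal univ x = X ^ m - C c := by
  refine (eq_of_monic_of_dvd_of_natDegree_le nodal_monic (monic_X_pow_sub_C c hm.ne')
    ?_ (by simp [natDegree_nodal])).symm
  refine Fintype.prod_dvd_of_coprime (pairwise_coprime_X_sub_C hinj) fun i => ?_
  simp [dvd_iff_isRoot, hx]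

theorem nodalWeight_eq_div (hinj : Function.Injective x) (hc : c ≠ 0) (hx : ∀ i, x i ^ m = c)
    (i : Fin m) : nodalWeight univ x i = x i / (m * c) := by
  have hm : 0 < m := i.pos
  have hxi := hx i
  rw [← pow_sub_one_mul hm.ne'] at hxi
  rw [nodalWeight_eq_eval_derivative_nodal (mem_univ i), nodal_eq_X_pow_sub_C hm hinj hx]
  simp only [derivative_sub, derivative_C, sub_zero, derivative_X_pow, eval_mul, eval_C,
    eval_pow, eval_X]
  have hx0 : x i ≠ 0 := right_ne_zero_of_mul (hxi ▸ hc)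
  rw [inv_eq_iff_eq_inv, inv_div, ← hxi]
  field_simp

variable [CharZero F]

theorem sum_C_pow_mul_nodal_erase (hinj : Function.Injective x) (hc : c ≠ 0)
    (hx : ∀ i, x i ^ m = c) {k : ℕ} (hk1 : 1 ≤ k) (hkm : k ≤ m) :
    ∑ i, C (x i ^ k) * nodal (univ.erase i) x = C (m * c) * X ^ (k - 1) := by
  have h := eq_interpolate (f := (X : F[X]) ^ (k - 1)) hinj.injOn (s := univ) (by
    rw [degree_X_pow, card_univ, Fintype.card_fin]; exact_mod_cast (by omega : k - 1 < m))
  rw [interpolate_apply] at h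
  rw [h, mul_sum]
  refine sum_congr rfl fun i _ => ?_
  rw [basis_eq_prod_sub_inv_mul_nodal_div (mem_univ i), ← nodal_erase_eq_nodal_div (mem_univ i),
    nodalWeight_eq_div hinj hc hx, eval_pow, eval_X, ← mul_assoc, ← mul_assoc, ← map_mul,
    ← map_mul]
  congr 2
  have hm0 : (m : F) ≠ 0 := Nat.cast_ne_zero.2 i.pos.ne'
  rw [← pow_sub_one_mul (by omega : k ≠ 0)]
  field_simp

theorem sum_pow_eq_zero (hinj : Function.Injective x) (hc : c ≠ 0) (hx : ∀ i, x i ^ m = c)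
    {k : ℕ} (hk1 : 1 ≤ k) (hkm : k < m) : ∑ i, x i ^ k = 0 := by
  have h := congrArg (coeff · (m - 1)) (sum_C_pow_mul_nodal_erase hinj hc hx hk1 hkm.le)
  simp only [finsetSum_coeff, coeff_C_mul, coeff_X_pow] at h
  have hlead (i : Fin m) : (nodal (univ.erase i) x).coeff (m - 1) = 1 := by
    simpa [natDegree_nodal] using (nodal_monic (s := univ.erase i) (v := x)).coeff_natDegree
  simpa [hlead, show m - 1 ≠ k - 1 by omega] using h

end RootsOfXPowSubC

theorem Qpoly_eq_nodal (m : ℕ) (x : Fin m → ℂ) : Qpoly m x = nodal univ x := rfl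

section FreeFixedPoint

variable {m k : ℕ} {x : Fin m → ℂ}

theorem differentiable_Hmap (m : ℕ) : Differentiable ℂ (Hmap m) := by
  have hQ (n : ℕ) : Differentiable ℂ fun y : Fin m → ℂ => (Qpoly m y).coeff n :=
    differentiable_coeff_prod_X_sub_C univ n
  rw [differentiable_pi]
  intro i
  unfold Hmap Ppoly Aanti
  fun_prop

theorem hasDerivAt_Aanti_add_smul_pow (hinj : Function.Injective x)
    (hcrit : ∀ i, x i ^ m = -1 / (m : ℂ)) (hk1 : 1 ≤ k) (hkm : k ≤ m) (j : Fin m) :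
    HasDerivAt (fun s : ℂ => Aanti m (x + s • fun i => x i ^ k) ((x + s • fun i => x i ^ k) j))
      (x j ^ k / k) 0 := by
  have hQ : HasCoeffDerivAt (fun s => Qpoly m (x + s • fun i => x i ^ k)) (X ^ (k - 1)) 0 := by
    have h := hasCoeffDerivAt_nodal_add_smul univ x fun i => x i ^ k
    have hm0 : (m : ℂ) ≠ 0 := Nat.cast_ne_zero.2 (by omega)
    rwa [sum_C_pow_mul_nodal_erase hinj (by simp; omega) hcrit hk1 hkm, neg_div, mul_neg,
      mul_one_div_cancel hm0, map_neg, map_one, neg_one_mul, neg_neg] at h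
  have hline : HasDerivAt (fun s : ℂ => (x + s • fun i => x i ^ k) j) (x j ^ k) 0 := by
    simpa using ((hasDerivAt_id (0 : ℂ)).mul_const (x j ^ k)).const_add (x j)
  have h := hQ.hasDerivAt_sum_coeff_mul_pow_div hline (N := m + 1)
    (by simp [Qpoly_eq_nodal, natDegree_nodal])
  refine h.congr_deriv ?_
  simp [Qpoly_eq_nodal, eval_nodal_at_node, coeff_X_pow, ite_div, Nat.sub_add_cancel hk1,
    Nat.cast_sub hk1, show k ≤ m + 1 by omega]

theorem hasLineDerivAt_Hmap (hinj : Function.Injective x) (hcrit : ∀ i, x i ^ m = -1 / (m : ℂ))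
    (hk1 : 1 ≤ k) (hkm : k < m) :
    HasLineDerivAt ℂ (Hmap m) ((((m : ℂ) + 1) / k) • fun i => x i ^ k) x fun i => x i ^ k := by
  rw [HasLineDerivAt, hasDerivAt_pi]
  intro i
  have hA (j : Fin m) := hasDerivAt_Aanti_add_smul_pow hinj hcrit hk1 hkm.le j
  refine ((HasDerivAt.fun_sum fun j _ => (hA i).sub (hA j)).const_mul
    (((m : ℂ) + 1) / m)).congr_deriv ?_
  have hm0 : (m : ℂ) ≠ 0 := Nat.cast_ne_zero.2 (by omega)
  rw [sum_sub_distrib, ← sum_div univ fun j => x j ^ k,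
    sum_pow_eq_zero hinj (by simp; omega) hcrit hk1 hkm]
  simp only [sum_const, card_univ, Fintype.card_fin, nsmul_eq_mul, zero_div, sub_zero,
    Pi.smul_apply, smul_eq_mul]
  field_simp

end FreeFixedPoint

theorem Hmap_spectrum_at_free_fixed_point_general (m : ℕ) (x : Fin m → ℂ)
    (hinj : Function.Injective x) (hcrit : ∀ i, x i ^ m = -1 / (m : ℂ)) :
    ∀ k : ℕ, 1 ≤ k → k ≤ m - 1 →
      (∑ i, x i ^ k = 0) ∧
      fderiv ℂ (Hmap m) x (fun i => x i ^ k)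
        = ((((m : ℂ) + 1) / k) • fun i => x i ^ k) ∧
      1 < ‖((m : ℂ) + 1) / k‖ := by
  intro k hk1 hk2
  have hkm : k < m := by omega
  refine ⟨sum_pow_eq_zero hinj (by simp; omega) hcrit hk1 hkm, ?_, ?_⟩
  · rw [← (differentiable_Hmap m x).lineDeriv_eq_fderiv]
    exact (hasLineDerivAt_Hmap hinj hcrit hk1 hkm).lineDeriv
  · rw [← Nat.cast_succ, norm_div, Complex.norm_natCast, Complex.norm_natCast,
      one_lt_div (by positivity)]
    exact_mod_cast (by omega : k < m + 1)

/-- At the fixed point `x` of `H` whose components are the `m` distinct critical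
points of `P z = ((m+1)/m) z + z^(m+1)` (i.e. the `m`-th roots of `-1/m`), the
vector `(x i ^ k)_i` is an eigenvector of `D_x H` with eigenvalue `(m+1)/k`, for
each `k ∈ [1, m-1]`; these eigenvalues lie outside the closed unit disk, so `x`
is repelling. -/
theorem Hmap_spectrum_at_free_fixed_point (m : ℕ) (hm : 2 ≤ m) (x : Fin m → ℂ)
    (hinj : Function.Injective x) (hcrit : ∀ i, x i ^ m = -1 / (m : ℂ))
    (hfix : Hmap m x = x) :
    ∀ k : ℕ, 1 ≤ k → k ≤ m - 1 →
      (∑ i, x i ^ k = 0) ∧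
      fderiv ℂ (Hmap m) x (fun i => x i ^ k)
        = ((((m : ℂ) + 1) / k) • fun i => x i ^ k) ∧
      1 < ‖((m : ℂ) + 1) / k‖ :=
  Hmap_spectrum_at_free_fixed_point_general m x hinj hcrit
end

section
/- Let P : ℂ → ℂ be a polynomial of degree d ≥ 2 and D_R the open disk of radius R centered at 0 chosen so that P^{-1}(D_R) is compactly contained in D_R. Let q be an integrable meromorphic quadratic differential on D_R (finitely many simple poles), and define the push-forward (P_*q)(y) = Σ_{g} g^*q where g ranges over local inverse branches of P. Then ∫_{D_R} |P_*q| ≤ ∫_{P^{-1}(D_R)} |q| < ∫_{D_R} |q|, i.e., the push-forward operator is a strict contraction for the L¹ norm, provided ∫_{D_R}|q| > 0 and not all mass of q is concentrated on P^{-1}(D_R). -/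
/-!
Away from its critical points `P` is a local homeomorphism, so `P⁻¹(D_R)` minus the critical
set is a countable disjoint union of measurable pieces on each of which `P` is injective. The
change of variables formula on each piece, with Jacobian `|P'|²`, turns
`∫_{D_R} ∑_{P x = y} |f x| / |P' x|² dy` into `∫_{P⁻¹(D_R)} |f|`, and the triangle inequality
bounds `|P_* q|` by that fiber sum. The strict inequality is additivity of the integral over
`P⁻¹(D_R) ⊆ D_R` and its complement.
-/

open Metric MeasureTheory Function
open scoped ENNReal

theorem IsLocalHomeomorphOn.exists_measurable_partition {X Y : Type*} [TopologicalSpace X]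
    [SecondCountableTopology X] [MeasurableSpace X] [OpensMeasurableSpace X] [TopologicalSpace Y]
    {φ : X → Y} {s : Set X} (hφ : IsLocalHomeomorphOn φ s) (hs : MeasurableSet s)
    (hne : s.Nonempty) :
    ∃ (e : ℕ → OpenPartialHomeomorph X Y) (V : ℕ → Set X), (∀ i, ⇑(e i) = φ) ∧
      (∀ i, MeasurableSet (V i)) ∧ (∀ i, V i ⊆ (e i).source) ∧ Pairwise (Disjoint on V) ∧
      ⋃ i, V i = s := by
  have : Nonempty (OpenPartialHomeomorph X Y) := ⟨(hφ _ hne.some_mem).choose⟩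
  choose! e he using hφ
  obtain ⟨T, hTs, hTc, hcover⟩ := TopologicalSpace.countable_cover_nhdsWithin fun x hx =>
    mem_nhdsWithin_of_mem_nhds ((e x).open_source.mem_nhds (he x hx).1)
  have hTne : T.Nonempty := by
    obtain ⟨y, hy, -⟩ := Set.mem_iUnion₂.1 (hcover hne.some_mem)
    exact ⟨y, hy⟩
  obtain ⟨c, rfl⟩ := hTc.exists_eq_range hTne
  rw [Set.biUnion_range] at hcover
  refine ⟨fun i => e (c i), disjointed fun i => (e (c i)).source ∩ s,
    fun i => (he _ (hTs (Set.mem_range_self i))).2.symm,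
    .disjointed fun i => (e (c i)).open_source.measurableSet.inter hs,
    fun i => (disjointed_subset _ i).trans Set.inter_subset_left, disjoint_disjointed _, ?_⟩
  rw [iUnion_disjointed, ← Set.iUnion_inter, Set.inter_eq_right.2 hcover]

theorem tsum_fiber_le_tsum_indicator_image_comp_symm {X Y : Type*} [TopologicalSpace X]
    [TopologicalSpace Y] {φ : X → Y} {s : Set X} (e : ℕ → OpenPartialHomeomorph X Y)
    (V : ℕ → Set X) (he : ∀ i, ⇑(e i) = φ) (hVe : ∀ i, V i ⊆ (e i).source) (hV : ⋃ i, V i = s)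
    (h : X → ℝ≥0∞) (y : Y) :
    ∑' x : ↥(s ∩ φ ⁻¹' {y}), h x ≤ ∑' i, (e i '' V i).indicator (h ∘ (e i).symm) y := by
  set branch : ℕ → ℝ≥0∞ := fun i => (e i '' V i).indicator (h ∘ (e i).symm) y
  have hpiece : ∀ x : ↥(s ∩ φ ⁻¹' {y}), ∃ i, (x : X) ∈ V i := fun x =>
    Set.mem_iUnion.1 (hV ▸ x.2.1)
  choose idx hidx using hpiece
  have hφx : ∀ x : ↥(s ∩ φ ⁻¹' {y}), e (idx x) x = y := fun x => by rw [he]; exact x.2.2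
  have hinj : Injective idx := fun a b hab => Subtype.ext <|
    (e (idx a)).injOn (hVe _ (hidx a)) (hVe _ (hab ▸ hidx b)) (by rw [hφx a, hab, hφx b])
  calc ∑' x : ↥(s ∩ φ ⁻¹' {y}), h x
      = ∑' x : ↥(s ∩ φ ⁻¹' {y}), branch (idx x) := by
        refine tsum_congr fun x => ?_
        have hy : y ∈ e (idx x) '' V (idx x) := hφx x ▸ Set.mem_image_of_mem _ (hidx x)
        simp only [branch]
        rw [Set.indicator_of_mem hy, comp_apply, ← congrArg (e (idx x)).symm (hφx x),
          (e _).left_inv (hVe _ (hidx x))]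
    _ ≤ ∑' i, branch i := ENNReal.tsum_comp_le_tsum_of_injective hinj branch

section AreaFormula

variable {E : Type*} [NormedAddCommGroup E] [NormedSpace ℝ E] [FiniteDimensional ℝ E]
  [MeasurableSpace E] [BorelSpace E] (μ : Measure E) [μ.IsAddHaarMeasure]
  {φ : E → E} {φ' : E → E →L[ℝ] E} {s : Set E}

theorem OpenPartialHomeomorph.lintegral_indicator_image_comp_symm
    (e : OpenPartialHomeomorph E E) {V : Set E} (hV : MeasurableSet V) (hVe : V ⊆ e.source)
    (he : ∀ x ∈ V, HasFDerivWithinAt e (φ' x) V x) (h : E → ℝ≥0∞) :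
    ∫⁻ y, (e '' V).indicator (h ∘ e.symm) y ∂μ =
      ∫⁻ x in V, ENNReal.ofReal |(φ' x).det| * h x ∂μ := by
  rw [lintegral_indicator (hV.image_of_continuousOn_injOn (e.continuousOn.mono hVe)
      (e.injOn.mono hVe)),
    lintegral_image_eq_lintegral_abs_det_fderiv_mul μ hV he (e.injOn.mono hVe)]
  refine setLIntegral_congr_fun hV fun x hx => ?_
  rw [comp_apply, e.left_inv (hVe hx)]

theorem lintegral_tsum_fiber_le_of_measurable (hs : MeasurableSet s)
    (hφ : IsLocalHomeomorphOn φ s) (hφ' : ∀ x ∈ s, HasFDerivWithinAt φ (φ' x) s x)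
    {h : E → ℝ≥0∞} (hh : Measurable h) :
    ∫⁻ y, ∑' x : ↥(s ∩ φ ⁻¹' {y}), h x ∂μ ≤
      ∫⁻ x in s, ENNReal.ofReal |(φ' x).det| * h x ∂μ := by
  rcases s.eq_empty_or_nonempty with rfl | hne
  · simp
  obtain ⟨e, V, he, hVm, hVe, hdisj, hV⟩ := hφ.exists_measurable_partition hs hne
  have hVs : ∀ i, V i ⊆ s := fun i => hV ▸ Set.subset_iUnion V i
  have hmeas : ∀ i, AEMeasurable ((e i '' V i).indicator (h ∘ (e i).symm)) μ := fun i => by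
    have hW := (hVm i).image_of_continuousOn_injOn ((e i).continuousOn.mono (hVe i))
      ((e i).injOn.mono (hVe i))
    refine (aemeasurable_indicator_iff hW).2 (hh.comp_aemeasurable ?_)
    exact ((e i).continuousOn_symm.mono ((e i).image_source_eq_target ▸
      Set.image_mono (hVe i))).aemeasurable hW
  calc ∫⁻ y, ∑' x : ↥(s ∩ φ ⁻¹' {y}), h x ∂μ
      ≤ ∫⁻ y, ∑' i, (e i '' V i).indicator (h ∘ (e i).symm) y ∂μ :=
        lintegral_mono fun y => tsum_fiber_le_tsum_indicator_image_comp_symm e V he hVe hV h y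
    _ = ∑' i, ∫⁻ x in V i, ENNReal.ofReal |(φ' x).det| * h x ∂μ := by
        rw [lintegral_tsum hmeas]
        refine tsum_congr fun i => (e i).lintegral_indicator_image_comp_symm μ (hVm i) (hVe i)
          (fun x hx => ?_) h
        rw [he i]
        exact (hφ' x (hVs i hx)).mono (hVs i)
    _ = ∫⁻ x in s, ENNReal.ofReal |(φ' x).det| * h x ∂μ := by
        rw [← lintegral_iUnion hVm hdisj, hV]

/-- Changing `h` on a null set `N ⊆ s` changes the fiber sums only over `φ '' N`, which is null
because `φ` is differentiable. -/
theorem lintegral_tsum_fiber_le (hs : MeasurableSet s)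
    (hφ : IsLocalHomeomorphOn φ s) (hφ' : ∀ x ∈ s, HasFDerivWithinAt φ (φ' x) s x)
    {h : E → ℝ≥0∞} (hh : AEMeasurable h (μ.restrict s)) :
    ∫⁻ y, ∑' x : ↥(s ∩ φ ⁻¹' {y}), h x ∂μ ≤
      ∫⁻ x in s, ENNReal.ofReal |(φ' x).det| * h x ∂μ := by
  set N := {x | x ∈ s ∧ h x ≠ hh.mk h x}
  have hN : μ N = 0 := by
    have := (ae_restrict_iff' hs).1 hh.ae_eq_mk
    rw [ae_iff] at this
    simpa only [N, Classical.not_imp, ne_eq] using this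
  have hφN : μ (φ '' N) = 0 := addHaar_image_eq_zero_of_differentiableOn_of_addHaar_eq_zero μ
    (fun x hx => (hφ' x hx.1).differentiableWithinAt.mono fun _ hz => hz.1) hN
  calc ∫⁻ y, ∑' x : ↥(s ∩ φ ⁻¹' {y}), h x ∂μ
      = ∫⁻ y, ∑' x : ↥(s ∩ φ ⁻¹' {y}), hh.mk h x ∂μ := by
        refine lintegral_congr_ae ((measure_eq_zero_iff_ae_notMem.1 hφN).mono fun y hy => ?_)
        exact tsum_congr fun x => not_not.1 fun hne => hy ⟨x, ⟨x.2.1, hne⟩, x.2.2⟩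
    _ ≤ ∫⁻ x in s, ENNReal.ofReal |(φ' x).det| * hh.mk h x ∂μ :=
        lintegral_tsum_fiber_le_of_measurable μ hs hφ hφ' hh.measurable_mk
    _ = ∫⁻ x in s, ENNReal.ofReal |(φ' x).det| * h x ∂μ :=
        lintegral_congr_ae (hh.ae_eq_mk.mono fun x hx => by simp only [hx])

end AreaFormula

theorem Complex.det_restrictScalars_toSpanSingleton (c : ℂ) :
    ((ContinuousLinearMap.toSpanSingleton ℂ c).restrictScalars ℝ).det = ‖c‖ ^ 2 := by
  simp [ContinuousLinearMap.det, LinearMap.det_restrictScalars, Algebra.norm_complex_eq,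
    Complex.normSq_eq_norm_sq]

namespace Polynomial

theorem isLocalHomeomorphOn_eval {𝕜 : Type*} [NontriviallyNormedField 𝕜] [CompleteSpace 𝕜]
    (p : 𝕜[X]) : IsLocalHomeomorphOn p.eval {x | p.derivative.eval x ≠ 0} := fun x hx =>
  ⟨_, ((p.hasStrictDerivAt x).hasStrictFDerivAt_equiv hx).mem_toOpenPartialHomeomorph_source,
    by simp⟩

/-- Critical points drop out of the fiber sum because `f x / 0 = 0`. -/
theorem enorm_sum_roots_le_tsum_fiber (P : ℂ[X]) (f : ℂ → ℂ) {s : Set ℂ} (y : ℂ)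
    (hs : ∀ x, P.eval x = y → P.derivative.eval x ≠ 0 → x ∈ s) :
    ‖∑ x ∈ (P - C y).roots.toFinset, f x / P.derivative.eval x ^ 2‖ₑ ≤
      ∑' x : ↥(s ∩ P.eval ⁻¹' {y}), ‖f x / P.derivative.eval ↑x ^ 2‖ₑ := by
  rw [tsum_subtype _ fun x => ‖f x / P.derivative.eval x ^ 2‖ₑ]
  refine (enorm_sum_le _ _).trans <| le_trans (Finset.sum_le_sum fun x hx => ?_)
    (ENNReal.sum_le_tsum _)
  have hPx := (mem_roots_sub_C'.1 (Multiset.mem_toFinset.1 hx)).2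
  by_cases hc : P.derivative.eval x = 0
  · simp [hc]
  · rw [Set.indicator_of_mem (s := s ∩ P.eval ⁻¹' {y}) ⟨hs x hPx hc, hPx⟩]

theorem lintegral_enorm_sum_roots_le (P : ℂ[X]) (f : ℂ → ℂ) {t : Set ℂ} (ht : MeasurableSet t)
    (hf : AEMeasurable (fun x => ‖f x‖) (volume.restrict (P.eval ⁻¹' t))) :
    ∫⁻ y in t, ‖∑ x ∈ (P - C y).roots.toFinset, f x / P.derivative.eval x ^ 2‖ₑ ≤
      ∫⁻ x in P.eval ⁻¹' t, ‖f x‖ₑ := by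
  set s := P.eval ⁻¹' t ∩ {x | P.derivative.eval x ≠ 0}
  have hs : MeasurableSet s := (P.continuous.measurable ht).inter
    (P.derivative.continuous.measurable (measurableSet_singleton 0).compl)
  have hderiv : ∀ x ∈ s, HasFDerivWithinAt P.eval
      ((ContinuousLinearMap.toSpanSingleton ℂ (P.derivative.eval x)).restrictScalars ℝ) s x :=
    fun x _ => ((P.hasDerivAt x).hasFDerivAt.restrictScalars ℝ).hasFDerivWithinAt
  have hmeas : AEMeasurable (fun x => ‖f x / P.derivative.eval x ^ 2‖ₑ)
      (volume.restrict s) := by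
    simp_rw [← ofReal_norm, norm_div, norm_pow]
    exact ((hf.mono_measure (Measure.restrict_mono Set.inter_subset_left le_rfl)).div
      (P.derivative.continuous.norm.pow 2).aemeasurable).ennreal_ofReal
  calc ∫⁻ y in t, ‖∑ x ∈ (P - C y).roots.toFinset, f x / P.derivative.eval x ^ 2‖ₑ
      ≤ ∫⁻ y, ∑' x : ↥(s ∩ P.eval ⁻¹' {y}), ‖f x / P.derivative.eval ↑x ^ 2‖ₑ :=
        (setLIntegral_mono' ht fun y hy => P.enorm_sum_roots_le_tsum_fiber f (s := s) y
          fun x hx hc => ⟨by rwa [Set.mem_preimage, hx], hc⟩).trans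
          (setLIntegral_le_lintegral _ _)
    _ ≤ ∫⁻ x in s, ‖f x‖ₑ := by
        refine (lintegral_tsum_fiber_le volume hs
          (P.isLocalHomeomorphOn_eval.mono Set.inter_subset_right) hderiv hmeas).trans_eq
          (setLIntegral_congr_fun hs fun x hx => ?_)
        rw [Complex.det_restrictScalars_toSpanSingleton, abs_of_nonneg (by positivity),
          ENNReal.ofReal_pow (norm_nonneg _), ofReal_norm, ← enorm_pow, ← enorm_mul,
          mul_div_cancel₀ _ (pow_ne_zero 2 hx.2)]
    _ ≤ ∫⁻ x in P.eval ⁻¹' t, ‖f x‖ₑ := lintegral_mono_set Set.inter_subset_left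

end Polynomial

theorem pushforward_quadratic_differential_contracts_general
    (P : Polynomial ℂ) (R : ℝ)
    (hcomp : closure (P.eval ⁻¹' ball (0 : ℂ) R) ⊆ ball (0 : ℂ) R)
    (f : ℂ → ℂ)
    (hint : IntegrableOn (fun x => ‖f x‖) (ball (0 : ℂ) R))
    (hcompl : 0 < ∫ x in ball (0 : ℂ) R \ P.eval ⁻¹' ball (0 : ℂ) R, ‖f x‖)
    (Pf : ℂ → ℂ)
    (hPf : ∀ y, Pf y = ∑ x ∈ (P - Polynomial.C y).roots.toFinset,
      f x / (P.derivative.eval x) ^ 2) :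
    (∫ y in ball (0 : ℂ) R, ‖Pf y‖) ≤ (∫ x in P.eval ⁻¹' ball (0 : ℂ) R, ‖f x‖) ∧
    (∫ x in P.eval ⁻¹' ball (0 : ℂ) R, ‖f x‖) < ∫ x in ball (0 : ℂ) R, ‖f x‖ := by
  have hpre : P.eval ⁻¹' ball 0 R ⊆ ball 0 R := subset_closure.trans hcomp
  have hf : IntegrableOn (fun x => ‖f x‖) (P.eval ⁻¹' ball 0 R) := hint.mono_set hpre
  refine ⟨?_, ?_⟩
  · have hle := P.lintegral_enorm_sum_roots_le f measurableSet_ball hf.aemeasurable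
    simp_rw [← hPf] at hle
    calc ∫ y in ball (0 : ℂ) R, ‖Pf y‖
        ≤ (∫⁻ y in ball (0 : ℂ) R, ‖Pf y‖ₑ).toReal := by
          simpa using (le_abs_self _).trans
            (norm_integral_le_lintegral_norm (μ := volume.restrict (ball (0 : ℂ) R)) (‖Pf ·‖))
      _ ≤ (∫⁻ x in P.eval ⁻¹' ball 0 R, ‖f x‖ₑ).toReal :=
          ENNReal.toReal_mono (by simpa using hf.2.ne) hle
      _ = ∫ x in P.eval ⁻¹' ball 0 R, ‖f x‖ := by
          rw [integral_eq_lintegral_of_nonneg_ae (.of_forall fun _ => norm_nonneg _) hf.1]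
          simp only [ofReal_norm]
  · rw [setIntegral_sdiff (P.continuous.measurable measurableSet_ball) hint hpre] at hcompl
    linarith

/-- **Strict contraction of the push-forward operator on quadratic differentials.**
Let `P` be a polynomial of degree `d ≥ 2` with `P⁻¹(D_R)` compactly contained in
`D_R`, and let `q = f dz²` be an integrable meromorphic quadratic differential on
`D_R` with finitely many simple poles. The push-forward `P_* q = (∑_g g^* q) dz²`
has density `y ↦ ∑_{x ∈ P⁻¹(y)} f x / (P' x)²`, and
`∫_{D_R} |P_* q| ≤ ∫_{P⁻¹(D_R)} |q| < ∫_{D_R} |q|`,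
provided `q` has positive mass on `D_R` not all concentrated on `P⁻¹(D_R)`. -/
theorem pushforward_quadratic_differential_contracts
    (P : Polynomial ℂ) (hd : 2 ≤ P.natDegree) (R : ℝ) (hR : 0 < R)
    (hcomp : closure (P.eval ⁻¹' ball (0 : ℂ) R) ⊆ ball (0 : ℂ) R)
    (f : ℂ → ℂ)
    (hmero : ∃ S : Finset ℂ, (∀ z ∈ ball (0 : ℂ) R \ (S : Set ℂ), AnalyticAt ℂ f z) ∧
      ∀ s ∈ S, AnalyticAt ℂ (fun z => (z - s) * f z) s)
    (hint : IntegrableOn (fun x => ‖f x‖) (ball (0 : ℂ) R))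
    (hpos : 0 < ∫ x in ball (0 : ℂ) R, ‖f x‖)
    (hcompl : 0 < ∫ x in ball (0 : ℂ) R \ P.eval ⁻¹' ball (0 : ℂ) R, ‖f x‖)
    (Pf : ℂ → ℂ)
    (hPf : ∀ y, Pf y = ∑ x ∈ (P - Polynomial.C y).roots.toFinset,
      f x / (P.derivative.eval x) ^ 2) :
    (∫ y in ball (0 : ℂ) R, ‖Pf y‖) ≤ (∫ x in P.eval ⁻¹' ball (0 : ℂ) R, ‖f x‖) ∧
    (∫ x in P.eval ⁻¹' ball (0 : ℂ) R, ‖f x‖) < ∫ x in ball (0 : ℂ) R, ‖f x‖ :=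
  pushforward_quadratic_differential_contracts_general P R hcomp f hint hcompl Pf hPf
end
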